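/- arXiv:1804.03856 — 8 statements merged into one kernel-verified Lean document; each statement's English description precedes it below -/
import Mathlib

section
/- Let N ≥ 2 and ε > 0. If x : [0,∞) → ℝ^N is differentiable, takes values in the open chamber {x ∈ ℝ^N : x_1 > … > x_N}, satisfies x'(t) = H^A(x(t)) for all t ≥ 0, and x(0) ∈ U_ε, then x(t) ∈ U_ε for all t ≥ 0. -/
/-!
The distance from a point `y` of the closed chamber to its boundary is
`min_k (y_k - y_{k+1}) / √2`: the nearest boundary points merge two adjacent coordinates into
their mean. So `U_ε` consists of the configurations whose adjacent gaps all exceed `c = √2 ε`, and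
it suffices to show that no gap can reach `c`. At the first time a gap `x_k - x_{k+1}` equals `c`
while all gaps are `≥ c`, the mutual repulsion `2 / c` of the colliding pair beats the pull of the
other particles, which from either side is at most `∑_{m ≥ 1} 1 / (m (m + 1) c) < 1 / c`. So the
gap is strictly increasing at that time, although it has just decreased to `c`.
-/

open Finset Metric Filter Topology

lemma one_div_sub_one_div_add_le {d : ℝ} (hd : 0 ≤ d) {a b : ℝ} (ha : 0 < a) (hab : a ≤ b) :
    1 / b - 1 / (b + d) ≤ 1 / a - 1 / (a + d) := by
  have key : ∀ s : ℝ, 0 < s → 1 / s - 1 / (s + d) = d / (s * (s + d)) := fun s hs => by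
    field_simp; ring
  rw [key a ha, key b (ha.trans_le hab)]
  gcongr; linarith

/-- Compare termwise with the telescoping series `∑ (1 / ((m + 1) d) - 1 / ((m + 2) d))`. -/
lemma sum_one_div_sub_one_div_add_lt {ι : Type*} (s : Finset ι) (r : ι → ℕ)
    (hr : Set.InjOn r s) (a : ι → ℝ) {d : ℝ} (hd : 0 < d)
    (ha : ∀ i ∈ s, (r i + 1) * d ≤ a i) :
    ∑ i ∈ s, (1 / a i - 1 / (a i + d)) < 1 / d := by
  classical
  set u : ℕ → ℝ := fun m => 1 / ((m + 1) * d)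
  obtain ⟨M, hM⟩ : ∃ M, s.image r ⊆ range M :=
    ⟨(s.image r).sup id + 1, fun m hm => mem_range.2 (Nat.lt_succ_of_le (le_sup (f := id) hm))⟩
  have hu : ∀ m, 0 ≤ u m - u (m + 1) := fun m => by
    simp only [u, sub_nonneg]; push_cast; gcongr; linarith
  calc ∑ i ∈ s, (1 / a i - 1 / (a i + d))
      ≤ ∑ i ∈ s, (u (r i) - u (r i + 1)) := sum_le_sum fun i hi => by
        have : u (r i) - u (r i + 1) = 1 / ((r i + 1) * d) - 1 / ((r i + 1) * d + d) := by
          simp only [u]; push_cast; ring_nf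
        rw [this]
        exact one_div_sub_one_div_add_le hd.le (by positivity) (ha i hi)
    _ = ∑ m ∈ s.image r, (u m - u (m + 1)) :=
        (sum_image (f := fun m => u m - u (m + 1)) hr).symm
    _ ≤ ∑ m ∈ range M, (u m - u (m + 1)) :=
        sum_le_sum_of_subset_of_nonneg hM fun m _ _ => hu m
    _ = 1 / d - u M := by rw [sum_range_sub']; simp [u]
    _ < 1 / d := by simp only [u]; linarith [show 0 < 1 / ((M + 1 : ℝ) * d) by positivity]

/-- The drift `H^A`. Because `1 / 0 = 0`, the excluded term `j = i` vanishes anyway, so the sum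
may as well run over all `j`. -/
noncomputable def dysonDrift {N : ℕ} (y : Fin N → ℝ) (i : Fin N) : ℝ :=
  ∑ j ∈ univ.erase i, 1 / (y i - y j)

lemma dysonDrift_eq_sum {N : ℕ} (y : Fin N → ℝ) (i : Fin N) :
    dysonDrift y i = ∑ j, 1 / (y i - y j) :=
  sum_erase _ (by simp)

lemma mul_le_sub_of_forall_le_sub_succ {n : ℕ} {y : Fin (n + 1) → ℝ} {d : ℝ}
    (hgap : ∀ m : Fin n, d ≤ y m.castSucc - y m.succ) {i j : Fin (n + 1)} (hij : i ≤ j) :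
    ((j - i : ℕ) : ℝ) * d ≤ y i - y j := by
  have hanti : Antitone fun m : Fin (n + 1) => y m + m * d :=
    Fin.antitone_iff_succ_le.2 fun m => by
      simp only [Fin.val_succ, Fin.val_castSucc]; push_cast; linarith [hgap m]
  have := hanti hij
  rw [Nat.cast_sub (Fin.le_def.1 hij)]
  linarith

theorem dysonDrift_castSucc_sub_succ_pos {n : ℕ} {y : Fin (n + 1) → ℝ} {d : ℝ} (hd : 0 < d)
    (hgap : ∀ m : Fin n, d ≤ y m.castSucc - y m.succ) {k : Fin n}
    (hk : y k.castSucc - y k.succ = d) :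
    0 < dysonDrift y k.castSucc - dysonDrift y k.succ := by
  set a := y k.castSucc
  set b := y k.succ
  set T : Fin (n + 1) → ℝ := fun j => 1 / (a - y j) - 1 / (b - y j)
  let L := univ.filter (· < k.castSucc)
  let R := univ.filter (k.succ < ·)
  have hsplit : dysonDrift y k.castSucc - dysonDrift y k.succ
      = ∑ j ∈ L, T j + (T k.castSucc + T k.succ) + ∑ j ∈ R, T j := by
    have huniv : (univ : Finset (Fin (n + 1))) = L ∪ {k.castSucc, k.succ} ∪ R := by
      ext j
      simp only [mem_univ, Fin.lt_def, Fin.val_castSucc, union_insert, union_singleton,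
        Fin.val_succ, insert_union, mem_insert, Fin.ext_iff, mem_union, mem_filter, true_and,
        true_iff, L, R]
      omega
    rw [dysonDrift_eq_sum, dysonDrift_eq_sum, ← sum_sub_distrib, huniv, sum_union, sum_union,
      sum_pair (Fin.castSucc_lt_succ (i := k)).ne]
    · simp only [Fin.lt_def, Fin.val_castSucc, disjoint_left, mem_filter, mem_univ, true_and,
        mem_insert, Fin.ext_iff, mem_singleton, Fin.val_succ, not_or, L]
      omega
    · simp only [Fin.lt_def, Fin.val_castSucc, union_insert, union_singleton, Fin.val_succ,
        disjoint_left, mem_insert, Fin.ext_iff, mem_filter, mem_univ, true_and, not_lt, L, R]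
      omega
  have hpair : T k.castSucc + T k.succ = 2 / d := by
    show 1 / (a - a) - 1 / (b - a) + (1 / (a - b) - 1 / (b - b)) = 2 / d
    rw [sub_self, sub_self, ← neg_sub a b, hk]; ring
  have hL : ∑ j ∈ L, T j = -∑ j ∈ L, (1 / (y j - a) - 1 / (y j - a + d)) := by
    rw [← sum_neg_distrib]
    refine sum_congr rfl fun j _ => ?_
    rw [show y j - a + d = y j - b by linarith]
    simp only [T, one_div, ← neg_sub (y j) a, ← neg_sub (y j) b, inv_neg]
    ring
  have hR : ∑ j ∈ R, T j = -∑ j ∈ R, (1 / (b - y j) - 1 / (b - y j + d)) := by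
    rw [← sum_neg_distrib]
    refine sum_congr rfl fun j _ => ?_
    rw [show b - y j + d = a - y j by linarith]
    ring
  have hL_lt : ∑ j ∈ L, (1 / (y j - a) - 1 / (y j - a + d)) < 1 / d := by
    refine sum_one_div_sub_one_div_add_lt L (fun j => k - 1 - j) ?_ _ hd fun j hj => ?_
    · intro i hi j hj hij
      simp only [Fin.lt_def, Fin.val_castSucc, coe_filter, mem_univ, true_and,
        Set.mem_ofPred_eq, L] at hi hj hij
      exact Fin.ext (by omega)
    · simp only [L, mem_filter, Finset.mem_univ, true_and] at hj
      have e : ((k - 1 - j : ℕ) : ℝ) + 1 = ((k.castSucc - j : ℕ) : ℝ) := by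
        rw [Fin.lt_def, Fin.val_castSucc] at hj
        rw [Fin.val_castSucc]; norm_cast; omega
      rw [e]
      exact mul_le_sub_of_forall_le_sub_succ hgap hj.le
  have hR_lt : ∑ j ∈ R, (1 / (b - y j) - 1 / (b - y j + d)) < 1 / d := by
    refine sum_one_div_sub_one_div_add_lt R (fun j => j - k - 2) ?_ _ hd fun j hj => ?_
    · intro i hi j hj hij
      simp only [Fin.lt_def, Fin.val_succ, coe_filter, mem_univ, true_and, Set.mem_ofPred_eq,
        R] at hi hj hij
      exact Fin.ext (by omega)
    · simp only [R, mem_filter, Finset.mem_univ, true_and] at hj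
      have e : ((j - k - 2 : ℕ) : ℝ) + 1 = ((j - k.succ : ℕ) : ℝ) := by
        rw [Fin.lt_def, Fin.val_succ] at hj
        rw [Fin.val_succ]; norm_cast; omega
      rw [e]
      exact mul_le_sub_of_forall_le_sub_succ hgap hj.le
  rw [hsplit, hpair, hL, hR]
  linarith [show 2 / d = 1 / d + 1 / d by ring]

lemma sq_sub_le_two_mul_dist_sq {ι : Type*} [Fintype ι] (y : EuclideanSpace ℝ ι)
    {z : EuclideanSpace ℝ ι} {i j : ι} (hij : i ≠ j) (hz : z i = z j) :
    (y i - y j) ^ 2 ≤ 2 * dist y z ^ 2 := by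
  rw [EuclideanSpace.dist_eq, Real.sq_sqrt (by positivity)]
  have := add_le_sum (f := fun l => dist (y l) (z l) ^ 2) (fun _ _ => by positivity)
    (Finset.mem_univ i) (Finset.mem_univ j) hij
  simp only [Real.dist_eq, sq_abs, hz] at this ⊢
  nlinarith [sq_nonneg (y i + y j - 2 * z j)]

def closedChamber (N : ℕ) : Set (EuclideanSpace ℝ (Fin N)) :=
  {x | ∀ i j : Fin N, i < j → x j ≤ x i}

section closedChamber

variable {n : ℕ}

lemma mem_closedChamber_iff_succ_le {x : EuclideanSpace ℝ (Fin (n + 1))} :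
    x ∈ closedChamber (n + 1) ↔ ∀ k : Fin n, x k.succ ≤ x k.castSucc := by
  rw [← Fin.antitone_iff_succ_le]
  exact ⟨fun h i j hij => hij.eq_or_lt.elim (fun e => e ▸ le_rfl) (h i j),
    fun h i j hij => h hij.le⟩

lemma isClosed_closedChamber (N : ℕ) : IsClosed (closedChamber N) := by
  simp only [closedChamber, Set.ofPred_forall]
  exact isClosed_iInter fun i => isClosed_iInter fun j => isClosed_iInter fun _ =>
    isClosed_le (by fun_prop) (by fun_prop)

lemma interior_closedChamber :
    interior (closedChamber (n + 1)) = {x | ∀ k : Fin n, x k.succ < x k.castSucc} := by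
  apply subset_antisymm
  · intro x hx k
    by_contra! hle
    have hlim : Tendsto (fun s : ℝ => x - s • EuclideanSpace.single k.castSucc 1)
        (𝓝[>] 0) (𝓝 x) := by
      have : Continuous fun s : ℝ => x - s • EuclideanSpace.single k.castSucc (1 : ℝ) := by
        fun_prop
      simpa using (this.tendsto 0).mono_left nhdsWithin_le_nhds
    obtain ⟨s, hsC, hs⟩ :=
      ((hlim.eventually (mem_interior_iff_mem_nhds.1 hx)).and self_mem_nhdsWithin).exists
    have := mem_closedChamber_iff_succ_le.1 hsC k
    simp only [PiLp.sub_apply, PiLp.smul_apply, PiLp.single_eq_same, smul_eq_mul, mul_one,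
      ne_eq, (Fin.castSucc_lt_succ (i := k)).ne', not_false_eq_true, PiLp.single_eq_of_ne,
      mul_zero, sub_zero] at this
    linarith
  · refine interior_maximal (fun x hx => mem_closedChamber_iff_succ_le.2 fun k => (hx k).le) ?_
    simp only [Set.ofPred_forall]
    exact isOpen_iInter_of_finite fun k => isOpen_lt (by fun_prop) (by fun_prop)

lemma frontier_closedChamber : frontier (closedChamber (n + 1)) =
    {x ∈ closedChamber (n + 1) | ∃ k : Fin n, x k.castSucc = x k.succ} := by
  rw [(isClosed_closedChamber _).frontier_eq, interior_closedChamber]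
  ext x
  simp only [Set.mem_sdiff, Set.mem_ofPred_eq, not_forall, not_lt]
  refine ⟨fun ⟨hx, k, hk⟩ => ⟨hx, k, le_antisymm hk (mem_closedChamber_iff_succ_le.1 hx k)⟩,
    fun ⟨hx, k, hk⟩ => ⟨hx, k, hk.le⟩⟩

lemma sqrt_two_mul_infDist_frontier_closedChamber_le {y : EuclideanSpace ℝ (Fin (n + 1))}
    (hy : y ∈ closedChamber (n + 1)) (k : Fin n) :
    √2 * infDist y (frontier (closedChamber (n + 1))) ≤ y k.castSucc - y k.succ := by
  have hlt : k.castSucc < k.succ := Fin.castSucc_lt_succ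
  set δ := y k.castSucc - y k.succ
  have hδ : 0 ≤ δ := sub_nonneg.2 (hy _ _ hlt)
  set m := (y k.castSucc + y k.succ) / 2
  let p : EuclideanSpace ℝ (Fin (n + 1)) :=
    WithLp.toLp 2 fun i => if i = k.castSucc ∨ i = k.succ then m else y i
  have hp : p ∈ frontier (closedChamber (n + 1)) := by
    rw [frontier_closedChamber]
    refine ⟨fun i j hij => ?_, k, by simp [p]⟩
    simp only [p]
    have hlo : y k.succ ≤ m := by simp only [m]; linarith
    have hhi : m ≤ y k.castSucc := by simp only [m]; linarith
    simp only [Fin.lt_def, Fin.ext_iff, Fin.val_castSucc, Fin.val_succ] at hij ⊢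
    split_ifs with hj hi hi
    · exact le_rfl
    · exact hhi.trans (hy _ _ (Fin.lt_def.2 (by simp only [Fin.val_castSucc]; omega)))
    · exact (hy _ _ (Fin.lt_def.2 (by simp only [Fin.val_succ]; omega))).trans hlo
    · exact hy _ _ (Fin.lt_def.2 hij)
  have hdist : dist y p = √(2 * (δ / 2) ^ 2) := by
    rw [EuclideanSpace.dist_eq, Fintype.sum_eq_add k.castSucc k.succ hlt.ne
      fun i hi => by simp [p, hi.1, hi.2]]
    simp only [p, Real.dist_eq, sq_abs]
    congr 1
    simp only [true_or, or_true, if_true, m, δ]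
    ring
  calc √2 * infDist y (frontier (closedChamber (n + 1)))
      ≤ √2 * dist y p := by gcongr; exact infDist_le_dist_of_mem hp
    _ = δ := by
      rw [hdist, ← Real.sqrt_mul zero_le_two, show 2 * (2 * (δ / 2) ^ 2) = δ ^ 2 by ring,
        Real.sqrt_sq hδ]

lemma lt_infDist_frontier_closedChamber [NeZero n] {y : EuclideanSpace ℝ (Fin (n + 1))} {ε : ℝ}
    (hgap : ∀ k : Fin n, √2 * ε < y k.castSucc - y k.succ) :
    ε < infDist y (frontier (closedChamber (n + 1))) := by
  have hne : (frontier (closedChamber (n + 1))).Nonempty :=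
    ⟨0, by rw [frontier_closedChamber]; exact ⟨fun _ _ _ => le_rfl, 0, rfl⟩⟩
  obtain ⟨z, hz, hdist⟩ := isClosed_frontier.exists_infDist_eq_dist hne y
  rw [frontier_closedChamber] at hz
  obtain ⟨-, k, hk⟩ := hz
  have hsq := sq_sub_le_two_mul_dist_sq y (Fin.castSucc_lt_succ (i := k)).ne hk
  rw [hdist]
  by_contra! hle
  have h1 : √2 * dist y z < y k.castSucc - y k.succ :=
    (mul_le_mul_of_nonneg_left hle (Real.sqrt_nonneg 2)).trans_lt (hgap k)
  have h2 := pow_lt_pow_left₀ h1 (by positivity) two_ne_zero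
  rw [mul_pow, Real.sq_sqrt zero_le_two] at h2
  linarith

end closedChamber

lemma HasDerivWithinAt.nonpos_of_forall_Ico {f : ℝ → ℝ} {f' a b : ℝ} {s : Set ℝ}
    (hf : HasDerivWithinAt f f' s b) (hs : Set.Ico a b ⊆ s) (hab : a < b)
    (hmin : ∀ x ∈ Set.Ico a b, f b ≤ f x) : f' ≤ 0 := by
  have := right_nhdsWithin_Ico_neBot hab
  have hslope : Tendsto (slope f b) (𝓝[Set.Ico a b] b) (𝓝 f') :=
    (hasDerivWithinAt_iff_tendsto_slope.1 hf).mono_left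
      (nhdsWithin_mono _ fun x hx => ⟨hs hx, hx.2.ne⟩)
  refine le_of_tendsto hslope (eventually_mem_nhdsWithin.mono fun x hx => ?_)
  rw [slope_def_field]
  exact div_nonpos_of_nonneg_of_nonpos (sub_nonneg.2 (hmin x hx)) (sub_nonpos.2 hx.2.le)

theorem forall_lt_of_deriv_pos_of_eq {ι : Type*} [Finite ι] {g g' : ι → ℝ → ℝ} {a c : ℝ}
    (hg : ∀ i, ∀ t ≥ a, HasDerivWithinAt (g i) (g' i t) (Set.Ici a) t)
    (ha : ∀ i, c < g i a)
    (hcontact : ∀ t > a, ∀ i, (∀ j, c ≤ g j t) → g i t = c → 0 < g' i t) :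
    ∀ t ≥ a, ∀ i, c < g i t := by
  by_contra! h
  obtain ⟨t, hta, i, hit⟩ := h
  have hS : IsCompact (Set.Icc a t ∩ ⋃ j, g j ⁻¹' Set.Iic c) := by
    refine isCompact_Icc.of_isClosed_subset ?_ Set.inter_subset_left
    rw [Set.inter_iUnion]
    refine isClosed_iUnion_of_finite fun j => ContinuousOn.preimage_isClosed_of_isClosed
      (fun s hs => ?_) isClosed_Icc isClosed_Iic
    exact (hg j s hs.1).continuousWithinAt.mono Set.Icc_subset_Ici_self
  obtain ⟨t₀, ⟨⟨ht₀a, ht₀t⟩, hmem⟩, hleast⟩ :=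
    hS.exists_isLeast ⟨t, ⟨hta, le_rfl⟩, Set.mem_iUnion.2 ⟨i, hit⟩⟩
  obtain ⟨i₀, hi₀⟩ := Set.mem_iUnion.1 hmem
  have hbefore : ∀ s ∈ Set.Ico a t₀, ∀ j, c < g j s := fun s hs j => by
    by_contra! hle
    exact (hleast ⟨⟨hs.1, hs.2.le.trans ht₀t⟩, Set.mem_iUnion.2 ⟨j, hle⟩⟩).not_gt hs.2
  have hat₀ : a < t₀ := ht₀a.lt_of_ne fun h => (ha i₀).not_ge (h ▸ hi₀)
  have := right_nhdsWithin_Ico_neBot hat₀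
  have hge : ∀ j, c ≤ g j t₀ := fun j =>
    ge_of_tendsto ((hg j t₀ ht₀a).continuousWithinAt.mono Set.Ico_subset_Ici_self)
      (eventually_mem_nhdsWithin.mono fun s hs => (hbefore s hs j).le)
  have heq : g i₀ t₀ = c := le_antisymm hi₀ (hge i₀)
  have hnonpos : g' i₀ t₀ ≤ 0 :=
    (hg i₀ t₀ ht₀a).nonpos_of_forall_Ico Set.Ico_subset_Ici_self hat₀
      fun s hs => heq ▸ (hbefore s hs i₀).le
  linarith [hcontact t₀ hat₀ i₀ hge heq]

theorem flow_HA_preserves_Ueps_general (N : ℕ) (hN : 2 ≤ N) (ε : ℝ) (hε : 0 < ε)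
    (C U : Set (EuclideanSpace ℝ (Fin N)))
    (hC : C = {x | ∀ i j : Fin N, i < j → x j ≤ x i})
    (hU : U = {x ∈ C | ε < Metric.infDist x (frontier C)})
    (H : EuclideanSpace ℝ (Fin N) → EuclideanSpace ℝ (Fin N))
    (hH : ∀ x, ∀ i : Fin N, H x i = ∑ j ∈ Finset.univ.erase i, 1 / (x i - x j))
    (x : ℝ → EuclideanSpace ℝ (Fin N))
    (hode : ∀ t ≥ (0:ℝ), HasDerivWithinAt x (H (x t)) (Set.Ici 0) t)
    (hx0 : x 0 ∈ U) :
    ∀ t ≥ (0:ℝ), x t ∈ U := by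
  obtain ⟨n, rfl⟩ : ∃ n, N = n + 1 := ⟨N - 1, by omega⟩
  have : NeZero n := ⟨by omega⟩
  obtain rfl : C = closedChamber (n + 1) := hC
  subst hU
  have hcoord : ∀ i, ∀ t ≥ (0:ℝ),
      HasDerivWithinAt (fun s => x s i) (dysonDrift (x t) i) (Set.Ici 0) t := fun i t ht => by
      have h := (EuclideanSpace.proj i).hasFDerivAt.comp_hasDerivWithinAt t (hode t ht)
      rwa [show EuclideanSpace.proj i (H (x t)) = dysonDrift (x t) i from hH (x t) i] at h
  have hgap : ∀ t ≥ (0:ℝ), ∀ k : Fin n, √2 * ε < x t k.castSucc - x t k.succ :=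
    forall_lt_of_deriv_pos_of_eq (fun k t ht => (hcoord _ t ht).sub (hcoord _ t ht))
      (fun k => (mul_lt_mul_of_pos_left hx0.2 (by positivity)).trans_le
        (sqrt_two_mul_infDist_frontier_closedChamber_le hx0.1 k))
      fun t _ k hge hk => dysonDrift_castSucc_sub_succ_pos (by positivity) hge hk
  intro t ht
  refine ⟨mem_closedChamber_iff_succ_le.2 fun k => ?_,
    lt_infDist_frontier_closedChamber (hgap t ht)⟩
  linarith [hgap t ht k, show 0 < √2 * ε by positivity]

/-- For `N ≥ 2` and `ε > 0`: a differentiable solution of the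
dynamical system `x' = H^A(x)` taking values in the open Weyl chamber of type `A`
which starts in `U_ε = {x ∈ C_N^A : dist(x, ∂C_N^A) > ε}` stays in `U_ε` for all `t ≥ 0`. -/
theorem flow_HA_preserves_Ueps (N : ℕ) (hN : 2 ≤ N) (ε : ℝ) (hε : 0 < ε)
    (C U : Set (EuclideanSpace ℝ (Fin N)))
    (hC : C = {x | ∀ i j : Fin N, i < j → x j ≤ x i})
    (hU : U = {x ∈ C | ε < Metric.infDist x (frontier C)})
    (H : EuclideanSpace ℝ (Fin N) → EuclideanSpace ℝ (Fin N))
    (hH : ∀ x, ∀ i : Fin N, H x i = ∑ j ∈ Finset.univ.erase i, 1 / (x i - x j))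
    (x : ℝ → EuclideanSpace ℝ (Fin N))
    (hchamber : ∀ t ≥ (0:ℝ), ∀ i j : Fin N, i < j → x t j < x t i)
    (hode : ∀ t ≥ (0:ℝ), HasDerivWithinAt x (H (x t)) (Set.Ici 0) t)
    (hx0 : x 0 ∈ U) :
    ∀ t ≥ (0:ℝ), x t ∈ U :=
  flow_HA_preserves_Ueps_general N hN ε hε C U hC hU H hH x hode hx0
end

section
/- Let N ≥ 2 and let x : [0,T] → ℝ^N (T > 0, or [0,∞)) be differentiable, take values in the open chamber {x ∈ ℝ^N : x_1 > … > x_N}, and satisfy x'(t) = H^A(x(t)) for all t. Then the minimal gap function t ↦ min_{1 ≤ i ≤ N−1} (x_i(t) − x_{i+1}(t)) is nondecreasing in t. -/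
/-!
If the `i`-th gap is minimal at time `t`, pair the term `j` of `H^A_i` with the term `j + 1` of
`H^A_{i+1}`: minimality gives `x_i - x_j ≤ x_{i+1} - x_{j+1}`, both of the same sign, so each
pair contributes nonnegatively to `H^A_i - H^A_{i+1}`, while the two unpaired terms
`1 / (x_i - x_N)` and `-1 / (x_{i+1} - x_1)` are positive. Hence every gap realising the minimum
is nondecreasing to first order, so the continuous minimum of the finitely many gaps has
nonnegative lower right Dini derivative and is nondecreasing.
-/

open Set Filter Topology

theorem one_div_le_one_div_of_mul_pos {K : Type*} [Field K] [LinearOrder K]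
    [IsStrictOrderedRing K] {u v : K} (huv : 0 < u * v) (h : u ≤ v) : 1 / v ≤ 1 / u := by
  rcases pos_and_pos_or_neg_and_neg_of_mul_pos huv with ⟨hu, -⟩ | ⟨-, hv⟩
  · exact one_div_le_one_div_of_le hu h
  · exact one_div_le_one_div_of_neg_of_le hv h

/-- `H^A(a)_k`; the term `j = k` vanishes because `1 / 0 = 0`. -/
def coulombDrift {K : Type*} [Field K] {N : ℕ} (a : Fin N → K) (k : Fin N) : K :=
  ∑ j, 1 / (a k - a j)

theorem coulombDrift_succ_lt_castSucc {K : Type*} [Field K] [LinearOrder K]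
    [IsStrictOrderedRing K] {n : ℕ} {a : Fin (n + 1) → K} (ha : StrictAnti a) {i : Fin n}
    (hmin : ∀ j : Fin n, a i.castSucc - a i.succ ≤ a j.castSucc - a j.succ) :
    coulombDrift a i.succ < coulombDrift a i.castSucc := by
  have hpair : ∀ j : Fin n,
      1 / (a i.succ - a j.succ) ≤ 1 / (a i.castSucc - a j.castSucc) := by
    intro j
    rcases lt_trichotomy j i with hji | rfl | hij
    · refine one_div_le_one_div_of_mul_pos (mul_pos_of_neg_of_neg ?_ ?_) ?_
      · exact sub_neg.2 (ha (Fin.castSucc_lt_castSucc_iff.2 hji))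
      · exact sub_neg.2 (ha (Fin.succ_lt_succ_iff.2 hji))
      · linarith [hmin j]
    · simp
    · refine one_div_le_one_div_of_mul_pos (mul_pos ?_ ?_) ?_
      · exact sub_pos.2 (ha (Fin.castSucc_lt_castSucc_iff.2 hij))
      · exact sub_pos.2 (ha (Fin.succ_lt_succ_iff.2 hij))
      · linarith [hmin j]
  have hfirst : 1 / (a i.succ - a 0) < 0 :=
    one_div_neg.2 (sub_neg.2 (ha (Fin.succ_pos i)))
  have hlast : 0 < 1 / (a i.castSucc - a (Fin.last n)) :=
    one_div_pos.2 (sub_pos.2 (ha (Fin.castSucc_lt_last i)))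
  rw [coulombDrift, coulombDrift, Fin.sum_univ_succ, Fin.sum_univ_castSucc]
  linarith [Finset.sum_le_sum fun j (_ : j ∈ Finset.univ) => hpair j]

theorem eventually_lt_slope_iInf {ι : Type*} [Finite ι] [Nonempty ι] {f : ι → ℝ → ℝ}
    {f' : ι → ℝ} {t r : ℝ} (hf : ∀ i, HasDerivWithinAt (f i) (f' i) (Ioi t) t)
    (hr : ∀ i, f i t = ⨅ j, f j t → r < f' i) :
    ∀ᶠ z in 𝓝[>] t, r < slope (fun s => ⨅ j, f j s) t z := by
  have key : ∀ i, ∀ᶠ z in 𝓝[>] t, (⨅ j, f j t) + r * (z - t) < f i z := by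
    intro i
    rcases (ciInf_le (finite_range fun j => f j t).bddBelow i).eq_or_lt with hact | hinact
    · have hslope := ((hasDerivWithinAt_iff_tendsto_slope' (lt_irrefl t)).1
        (hf i)).eventually_const_lt (hr i hact.symm)
      filter_upwards [hslope, self_mem_nhdsWithin] with z hz hzt
      rw [slope_def_field, lt_div_iff₀ (sub_pos.2 hzt)] at hz
      linarith
    · have hcont : ContinuousWithinAt (fun z => f i z - r * (z - t)) (Ioi t) t :=
        (hf i).continuousWithinAt.sub
          ((continuousWithinAt_id.sub continuousWithinAt_const).const_mul r)
      filter_upwards [hcont.eventually_const_lt (by simpa using hinact)] with z hz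
      linarith
  filter_upwards [eventually_all.2 key, self_mem_nhdsWithin] with z hz hzt
  obtain ⟨j, hj⟩ := exists_eq_ciInf_of_finite (f := fun j => f j z)
  rw [slope_def_field, lt_div_iff₀ (sub_pos.2 hzt), ← hj]
  linarith [hz j]

theorem monotoneOn_iInf_of_hasDerivWithinAt {ι : Type*} [Finite ι] {f f' : ι → ℝ → ℝ} {a b : ℝ}
    (hf : ∀ i, ∀ t ∈ Icc a b, HasDerivWithinAt (f i) (f' i t) (Icc a b) t)
    (hact : ∀ t ∈ Ico a b, ∀ i, f i t = ⨅ j, f j t → 0 ≤ f' i t) :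
    MonotoneOn (fun t => ⨅ i, f i t) (Icc a b) := by
  rcases isEmpty_or_nonempty ι with hι | hι
  · simp_rw [Real.iInf_of_isEmpty]
    exact monotoneOn_const
  have := Fintype.ofFinite ι
  have hcont : ContinuousOn (fun t => ⨅ i, f i t) (Icc a b) := by
    simp_rw [← Finset.inf'_univ_eq_ciInf]
    exact fun t ht =>
      ContinuousWithinAt.finset_inf'_apply _ fun i _ => (hf i t ht).continuousWithinAt
  intro s hs u hu hsu
  have hbound : ∀ t ∈ Ico s u, ∀ r, (0 : ℝ → ℝ) t < r →
      ∃ᶠ z in 𝓝[>] t, slope (fun t => -⨅ i, f i t) t z < r := by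
    intro t ht r hr
    have htab : t ∈ Ico a b := ⟨hs.1.trans ht.1, ht.2.trans_le hu.2⟩
    have hf_right : ∀ i, HasDerivWithinAt (f i) (f' i t) (Ioi t) t := fun i =>
      (hf i t (Ico_subset_Icc_self htab)).mono_of_mem_nhdsWithin (Icc_mem_nhdsGT_of_mem htab)
    refine (eventually_lt_slope_iInf hf_right (r := -r) fun i hi => ?_).frequently.mono ?_
    · linarith [hact t htab i hi, show (0:ℝ) < r from hr]
    · intro z hz
      rw [slope_neg]
      linarith
  have := image_le_of_liminf_slope_right_le_deriv_boundary (B := fun _ => -⨅ i, f i s)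
    (hcont.mono (Icc_subset_Icc hs.1 hu.2)).neg le_rfl continuousOn_const
    (fun _ _ => hasDerivWithinAt_const _ _ _) hbound (right_mem_Icc.2 hsu)
  simpa using this

/-- For `N ≥ 2` and a differentiable solution `x : [0,T] → ℝ^N` of
`x' = H^A(x)` with values in the open Weyl chamber of type `A`, the minimal gap
`t ↦ min_{1 ≤ i ≤ N−1} (x_i(t) − x_{i+1}(t))` is nondecreasing on `[0,T]`. -/
theorem minGap_monotone_HA (N : ℕ) (hN : 2 ≤ N) (T : ℝ)
    (H : EuclideanSpace ℝ (Fin N) → EuclideanSpace ℝ (Fin N))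
    (hH : ∀ x, ∀ i : Fin N, H x i = ∑ j ∈ Finset.univ.erase i, 1 / (x i - x j))
    (x : ℝ → EuclideanSpace ℝ (Fin N))
    (hchamber : ∀ t ∈ Set.Icc (0:ℝ) T, ∀ i j : Fin N, i < j → x t j < x t i)
    (hode : ∀ t ∈ Set.Icc (0:ℝ) T, HasDerivWithinAt x (H (x t)) (Set.Icc 0 T) t) :
    MonotoneOn
      (fun t => ⨅ i : Fin (N - 1),
        (x t ⟨i.val, by have := i.isLt; omega⟩ - x t ⟨i.val + 1, by have := i.isLt; omega⟩))
      (Set.Icc (0:ℝ) T) := by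
  obtain ⟨n, rfl⟩ : ∃ n, N = n + 1 := ⟨N - 1, by omega⟩
  have hcoord : ∀ k, ∀ t ∈ Icc 0 T,
      HasDerivWithinAt (fun s => x s k) (H (x t) k) (Icc 0 T) t := fun k t ht =>
    (EuclideanSpace.proj (𝕜 := ℝ) k).hasFDerivAt.comp_hasDerivWithinAt t (hode t ht)
  have hdrift : ∀ y k, H y k = coulombDrift (fun j => y j) k :=
    fun y k => (hH y k).trans (Finset.sum_erase _ (by simp))
  show MonotoneOn (fun t => ⨅ i : Fin n, x t i.castSucc - x t i.succ) _
  refine monotoneOn_iInf_of_hasDerivWithinAt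
    (fun i t ht => (hcoord _ t ht).sub (hcoord _ t ht)) fun t ht i hi => ?_
  have hmin : ∀ j : Fin n, x t i.castSucc - x t i.succ ≤ x t j.castSucc - x t j.succ :=
    fun j => hi ▸ ciInf_le (finite_range _).bddBelow j
  have hanti : StrictAnti fun k => x t k :=
    fun k l hkl => hchamber t (Ico_subset_Icc_self ht) k l hkl
  rw [hdrift, hdrift, sub_nonneg]
  exact (coulombDrift_succ_lt_castSucc hanti hmin).le
end

section
/- Let N ≥ 2 and let y ∈ ℝ^N with y_1 > y_2 > … > y_N. Define W(x) := 2 Σ_{1 ≤ i < j ≤ N} ln(x_i − x_j) − ‖x‖²/2 on the open chamber {x ∈ ℝ^N : x_1 > … > x_N}. Then W(x) ≤ W(y) for all x in the open chamber (i.e. W is maximal at y) if and only if y_i/2 = Σ_{j ≠ i} 1/(y_i − y_j) for every i = 1,…,N. -/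
/-!
`W` is concave on the open chamber, which is convex: it is a sum of logarithms of positive
linear forms minus a convex quadratic. For a concave function, an interior point is a global
maximum exactly when the derivative vanishes there, and the `i`-th component of the gradient
of `W` at `y` is `2 ∑_{j ≠ i} 1/(y_i − y_j) − y_i`.
-/

open Finset Topology

lemma concaveOn_finset_sum {ι E : Type*} [AddCommGroup E] [Module ℝ E] {s : Set E}
    (hs : Convex ℝ s) {t : Finset ι} {f : ι → E → ℝ} (hf : ∀ i ∈ t, ConcaveOn ℝ s (f i)) :
    ConcaveOn ℝ s (fun x => ∑ i ∈ t, f i x) := by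
  classical
  induction t using Finset.induction_on with
  | empty => simpa using concaveOn_const (0 : ℝ) hs
  | insert a t ha ih =>
    simp only [sum_insert ha]
    exact (hf a (mem_insert_self a t)).add (ih fun i hi => hf i (mem_insert_of_mem hi))

lemma ConcaveOn.isMaxOn_iff_of_hasFDerivAt {E : Type*} [NormedAddCommGroup E] [NormedSpace ℝ E]
    {s : Set E} {f : E → ℝ} {f' : E →L[ℝ] ℝ} {y : E} (hf : ConcaveOn ℝ s f) (hs : s ∈ 𝓝 y)
    (hf' : HasFDerivAt f f' y) :
    IsMaxOn f s y ↔ f' = 0 := by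
  refine ⟨fun hmax => (hmax.isLocalMax hs).hasFDerivAt_eq_zero hf', fun h0 x hx => ?_⟩
  set g : ℝ →ᵃ[ℝ] E := AffineMap.lineMap y x
  have hline : ConcaveOn ℝ (g ⁻¹' s) (f ∘ g) := hf.comp_affineMap g
  have hderiv : HasDerivAt (f ∘ g) (f' (x - y)) 0 :=
    hf'.comp_hasDerivAt_of_eq 0 AffineMap.hasDerivAt_lineMap (by simp [g])
  have hslope := hline.slope_le_of_hasDerivAt (by simpa [g] using mem_of_mem_nhds hs)
    (by simpa [g] using hx) zero_lt_one hderiv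
  simpa [slope, g, h0] using hslope

def weylChamber (ι : Type*) [Fintype ι] [LinearOrder ι] : Set (EuclideanSpace ℝ ι) :=
  {x | ∀ i j, i < j → x j < x i}

noncomputable def weylPotential (ι : Type*) [Fintype ι] [LinearOrder ι]
    (x : EuclideanSpace ℝ ι) : ℝ :=
  2 * (∑ p ∈ univ.filter (fun p : ι × ι => p.1 < p.2), Real.log (x p.1 - x p.2)) - ‖x‖ ^ 2 / 2

section Weyl

variable {ι : Type*} [Fintype ι] [LinearOrder ι]

lemma sum_filter_lt_sub_mul_of_antisymm {R : Type*} [CommRing R] (v : ι → R) (a : ι → ι → R)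
    (ha : ∀ i j, a j i = -a i j) :
    ∑ p ∈ univ.filter (fun p : ι × ι => p.1 < p.2), a p.1 p.2 * (v p.1 - v p.2)
      = ∑ i, v i * ∑ j ∈ univ.erase i, a i j := by
  have hswap : ∑ p ∈ univ.filter (fun p : ι × ι => p.1 < p.2), a p.2 p.1 * v p.2
      = ∑ p ∈ univ.filter (fun p : ι × ι => p.2 < p.1), a p.1 p.2 * v p.1 :=
    sum_nbij' Prod.swap Prod.swap (by simp) (by simp) (by simp) (by simp) (by simp)
  have hsplit : univ.filter (fun p : ι × ι => p.1 ≠ p.2)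
      = univ.filter (fun p : ι × ι => p.1 < p.2) ∪ univ.filter (fun p : ι × ι => p.2 < p.1) := by
    ext p; simp only [mem_filter, mem_univ, true_and, mem_union]; exact ne_iff_lt_or_gt
  calc ∑ p ∈ univ.filter (fun p : ι × ι => p.1 < p.2), a p.1 p.2 * (v p.1 - v p.2)
      = ∑ p ∈ univ.filter (fun p : ι × ι => p.1 < p.2), a p.1 p.2 * v p.1
        + ∑ p ∈ univ.filter (fun p : ι × ι => p.1 < p.2), a p.2 p.1 * v p.2 := by
        rw [← sum_add_distrib]
        exact sum_congr rfl fun p _ => by rw [ha]; ring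
    _ = ∑ p ∈ univ.filter (fun p : ι × ι => p.1 ≠ p.2), a p.1 p.2 * v p.1 := by
        rw [hswap, hsplit, sum_union (disjoint_filter.2 fun p _ h h' => lt_asymm h h')]
    _ = ∑ i, v i * ∑ j ∈ univ.erase i, a i j := by
        rw [sum_filter, Fintype.sum_prod_type]
        refine sum_congr rfl fun i _ => ?_
        rw [mul_sum, ← sum_filter, filter_ne]
        exact sum_congr rfl fun j _ => mul_comm _ _

lemma isOpen_weylChamber : IsOpen (weylChamber ι) := by
  have : weylChamber ι = ⋂ i, ⋂ j, ⋂ (_ : i < j), {x : EuclideanSpace ℝ ι | x j < x i} := by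
    ext x; simp [weylChamber]
  rw [this]
  exact isOpen_iInter_of_finite fun i => isOpen_iInter_of_finite fun j =>
    isOpen_iInter_of_finite fun _ =>
      isOpen_lt (EuclideanSpace.proj j).continuous (EuclideanSpace.proj i).continuous

lemma convex_weylChamber : Convex ℝ (weylChamber ι) := by
  intro x hx z hz a b ha hb hab i j hij
  have hxij := hx i j hij
  have hzij := hz i j hij
  simp only [PiLp.add_apply, PiLp.smul_apply, smul_eq_mul]
  rcases ha.eq_or_lt with rfl | ha
  · simp only [zero_add] at hab; subst hab; simpa using hzij
  · nlinarith [mul_lt_mul_of_pos_left hxij ha, mul_le_mul_of_nonneg_left hzij.le hb]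

lemma concaveOn_weylPotential : ConcaveOn ℝ (weylChamber ι) (weylPotential ι) := by
  have hlog : ∀ p ∈ univ.filter (fun p : ι × ι => p.1 < p.2),
      ConcaveOn ℝ (weylChamber ι) (fun x : EuclideanSpace ℝ ι => Real.log (x p.1 - x p.2)) := by
    intro p hp
    let L : EuclideanSpace ℝ ι →L[ℝ] ℝ := EuclideanSpace.proj p.1 - EuclideanSpace.proj p.2
    refine (strictConcaveOn_log_Ioi.concaveOn.comp_linearMap L.toLinearMap).subset
      (fun x hx => ?_) convex_weylChamber
    simpa [L] using hx p.1 p.2 (mem_filter.1 hp).2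
  have hsq : ConvexOn ℝ (weylChamber ι) (fun x : EuclideanSpace ℝ ι => ‖x‖ ^ 2 / 2) := by
    have := (convexOn_univ_norm (E := EuclideanSpace ℝ ι)).pow (fun _ _ => norm_nonneg _) 2
    refine ((this.subset (Set.subset_univ _) convex_weylChamber).smul
      (by norm_num : (0 : ℝ) ≤ 1 / 2)).congr fun x _ => ?_
    simp only [Pi.pow_apply, smul_eq_mul]; ring
  exact ((concaveOn_finset_sum convex_weylChamber hlog).smul zero_le_two).sub hsq
    |>.congr fun _ _ => rfl

lemma hasGradientAt_weylPotential {y : EuclideanSpace ℝ ι} (hy : y ∈ weylChamber ι) :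
    HasGradientAt (weylPotential ι)
      (WithLp.toLp 2 fun i => 2 * ∑ j ∈ univ.erase i, 1 / (y i - y j) - y i) y := by
  have hlog : ∀ p ∈ univ.filter (fun p : ι × ι => p.1 < p.2),
      HasFDerivAt (fun x : EuclideanSpace ℝ ι => Real.log (x p.1 - x p.2))
        ((y p.1 - y p.2)⁻¹ • (EuclideanSpace.proj (𝕜 := ℝ) p.1 - EuclideanSpace.proj p.2)) y := by
    intro p hp
    have hpos : 0 < y p.1 - y p.2 := sub_pos.2 (hy p.1 p.2 (mem_filter.1 hp).2)
    exact (EuclideanSpace.proj p.1 - EuclideanSpace.proj p.2 :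
      EuclideanSpace ℝ ι →L[ℝ] ℝ).hasFDerivAt.log hpos.ne'
  have hderiv := ((HasFDerivAt.fun_sum hlog).const_mul 2).sub
    ((hasFDerivAt_id y).norm_sq.mul_const 2⁻¹)
  rw [hasGradientAt_iff_hasFDerivAt]
  refine (hderiv.congr_fderiv ?_).congr_of_eventuallyEq (Filter.Eventually.of_forall fun x => ?_)
  · ext v
    have key := sum_filter_lt_sub_mul_of_antisymm (v ·) (fun i j => (y i - y j)⁻¹)
      fun i j => by rw [← inv_neg, neg_sub]
    simp only [id_eq, ContinuousLinearMap.comp_id, sub_apply, smul_apply, _root_.sum_apply,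
      PiLp.proj_apply, smul_eq_mul, coe_innerSL_apply, PiLp.inner_apply, RCLike.inner_apply,
      Real.ringHom_apply, nsmul_eq_mul, Nat.cast_ofNat, one_div,
      InnerProductSpace.toDual_apply_apply]
    rw [key]
    simp only [mul_sub, sum_sub_distrib, mul_left_comm _ (2 : ℝ), ← mul_sum]
    ring
  · simp only [weylPotential, Pi.sub_apply, id]
    ring

end Weyl

theorem W_max_iff_stationary_A_general (N : ℕ)
    (y : EuclideanSpace ℝ (Fin N))
    (hy : ∀ i j : Fin N, i < j → y j < y i)
    (W : EuclideanSpace ℝ (Fin N) → ℝ)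
    (hW : ∀ x, W x = 2 * (∑ p ∈ Finset.univ.filter (fun p : Fin N × Fin N => p.1 < p.2),
        Real.log (x p.1 - x p.2)) - ‖x‖ ^ 2 / 2) :
    (∀ x : EuclideanSpace ℝ (Fin N), (∀ i j : Fin N, i < j → x j < x i) → W x ≤ W y)
      ↔ (∀ i : Fin N, y i / 2 = ∑ j ∈ Finset.univ.erase i, 1 / (y i - y j)) := by
  obtain rfl : W = weylPotential (Fin N) := funext hW
  have hgrad := hasGradientAt_weylPotential hy
  rw [hasGradientAt_iff_hasFDerivAt] at hgrad
  have hmax_iff := concaveOn_weylPotential.isMaxOn_iff_of_hasFDerivAt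
    (isOpen_weylChamber.mem_nhds hy) hgrad
  rw [LinearIsometryEquiv.map_eq_zero_iff, WithLp.toLp_eq_zero, funext_iff] at hmax_iff
  refine hmax_iff.trans (forall_congr' fun i => ?_)
  simp only [Pi.zero_apply, sub_eq_zero]
  constructor <;> intro h <;> linarith

/-- For `N ≥ 2` and `y` in the open Weyl chamber of type `A`, the
function `W(x) = 2 ∑_{i<j} ln(x_i − x_j) − ‖x‖²/2` is maximal at `y` (among points of
the open chamber) if and only if `y_i/2 = ∑_{j ≠ i} 1/(y_i − y_j)` for all `i`. -/
theorem W_max_iff_stationary_A (N : ℕ) (hN : 2 ≤ N)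
    (y : EuclideanSpace ℝ (Fin N))
    (hy : ∀ i j : Fin N, i < j → y j < y i)
    (W : EuclideanSpace ℝ (Fin N) → ℝ)
    (hW : ∀ x, W x = 2 * (∑ p ∈ Finset.univ.filter (fun p : Fin N × Fin N => p.1 < p.2),
        Real.log (x p.1 - x p.2)) - ‖x‖ ^ 2 / 2) :
    (∀ x : EuclideanSpace ℝ (Fin N), (∀ i j : Fin N, i < j → x j < x i) → W x ≤ W y)
      ↔ (∀ i : Fin N, y i / 2 = ∑ j ∈ Finset.univ.erase i, 1 / (y i - y j)) :=
  W_max_iff_stationary_A_general N y hy W hW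
end

section
/- Let N ≥ 1 and let y ∈ ℝ^N with y_1 > y_2 > … > y_N. Then y_i/2 = Σ_{j ≠ i} 1/(y_i − y_j) holds for every i = 1,…,N if and only if He_N(y_i) = 0 for every i = 1,…,N (equivalently, the entries of y are exactly the N ordered zeros of He_N; equivalently, the entries of y/√2 are the ordered zeros of the physicists' Hermite polynomial H_N). -/
/-!
With `p = ∏ⱼ (X - yⱼ)`, at each simple root `p''(yᵢ) = 2 p'(yᵢ) ∑_{j ≠ i} 1/(yᵢ - yⱼ)`, so the
stationarity equations say that `L p = p'' - X p' + N p` vanishes at every `yᵢ`. Since `p` and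
`He_N` are monic of degree `N` and `L He_N = 0`, the difference `r = p - He_N` has degree `< N`
and `L r = L p`. The operator `L` does not raise degrees, so `L r` vanishes at the `N` points `yᵢ`
iff `L r = 0`; and `L` multiplies the leading coefficient of `r` by `N - deg r ≠ 0`, so this
happens iff `r = 0`, i.e. iff `He_N` vanishes at every `yᵢ`.
-/

open Polynomial Finset

namespace Polynomial

variable {R : Type*} [CommRing R]

noncomputable def hermiteOp (n : ℕ) (p : R[X]) : R[X] :=
  derivative (derivative p) - X * derivative p + (n : R[X]) * p

theorem hermiteOp_sub (n : ℕ) (p q : R[X]) :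
    hermiteOp n (p - q) = hermiteOp n p - hermiteOp n q := by
  simp only [hermiteOp, map_sub]
  ring

theorem coeff_hermiteOp (n : ℕ) (p : R[X]) (k : ℕ) :
    (hermiteOp n p).coeff k = (k + 2) * (k + 1) * p.coeff (k + 2) + (n - k) * p.coeff k := by
  have hX : (X * derivative p).coeff k = k * p.coeff k := by
    cases k with
    | zero => simp
    | succ k => rw [coeff_X_mul, coeff_derivative]; push_cast; ring
  simp only [hermiteOp, coeff_add, coeff_sub, hX, coeff_derivative, ← C_eq_natCast, coeff_C_mul]
  push_cast
  ring

theorem hermiteOp_map {S : Type*} [CommRing S] (f : R →+* S) (n : ℕ) (p : R[X]) :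
    hermiteOp n (p.map f) = (hermiteOp n p).map f := by
  simp [hermiteOp, derivative_map]

theorem natDegree_hermiteOp_le (n : ℕ) (p : R[X]) :
    (hermiteOp n p).natDegree ≤ p.natDegree := by
  rw [natDegree_le_iff_coeff_eq_zero]
  intro k hk
  rw [coeff_hermiteOp, coeff_eq_zero_of_natDegree_lt hk,
    coeff_eq_zero_of_natDegree_lt (by omega : p.natDegree < k + 2)]
  ring

theorem eq_zero_of_hermiteOp_eq_zero [IsDomain R] [CharZero R] {n : ℕ} {p : R[X]}
    (h : hermiteOp n p = 0) (hp : p.natDegree < n) : p = 0 := by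
  have hcoeff := congrArg (coeff · p.natDegree) h
  simp only [coeff_hermiteOp, coeff_zero,
    coeff_eq_zero_of_natDegree_lt (by omega : p.natDegree < p.natDegree + 2), mul_zero,
    zero_add] at hcoeff
  have hn : (n : R) - p.natDegree ≠ 0 := sub_ne_zero.mpr (by exact_mod_cast hp.ne')
  rw [← leadingCoeff_eq_zero]
  exact (mul_eq_zero.mp hcoeff).resolve_left hn

theorem derivative_hermite_succ (n : ℕ) :
    derivative (hermite (n + 1)) = ((n : ℤ[X]) + 1) * hermite n := by
  induction n with
  | zero => simp
  | succ n ih =>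
    rw [hermite_succ (n + 1), derivative_sub, derivative_mul, derivative_X, one_mul, ih,
      derivative_mul]
    simp only [derivative_add, derivative_natCast, derivative_one, add_zero, zero_mul, zero_add]
    push_cast
    linear_combination (-(n : ℤ[X]) - 1) * hermite_succ n

theorem hermiteOp_hermite (n : ℕ) : hermiteOp n (hermite n) = 0 := by
  cases n with
  | zero => simp [hermiteOp]
  | succ n =>
    rw [hermiteOp, derivative_hermite_succ, derivative_mul]
    simp only [derivative_add, derivative_natCast, derivative_one, add_zero, zero_mul, zero_add]
    push_cast
    linear_combination ((n : ℤ[X]) + 1) * hermite_succ n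

theorem eval_prod_X_sub_C_of_mem {ι : Type*} {s : Finset ι} {y : ι → R} {i : ι} (hi : i ∈ s) :
    eval (y i) (∏ j ∈ s, (X - C (y j))) = 0 := by
  rw [eval_prod]
  exact prod_eq_zero hi (by simp)

theorem eval_derivative_prod_X_sub_C {ι : Type*} [DecidableEq ι] {s : Finset ι} {y : ι → R}
    {i : ι} (hi : i ∈ s) :
    eval (y i) (derivative (∏ j ∈ s, (X - C (y j)))) = ∏ j ∈ s.erase i, (y i - y j) := by
  rw [← mul_prod_erase s _ hi]
  simp [eval_prod]

theorem eval_derivative_derivative_prod_X_sub_C {K ι : Type*} [Field K] [DecidableEq ι]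
    {s : Finset ι} {y : ι → K} (hy : Set.InjOn y s) {i : ι} (hi : i ∈ s) :
    eval (y i) (derivative (derivative (∏ j ∈ s, (X - C (y j))))) =
      2 * eval (y i) (derivative (∏ j ∈ s, (X - C (y j)))) *
        ∑ j ∈ s.erase i, 1 / (y i - y j) := by
  rw [← mul_prod_erase s _ hi]
  set q := ∏ j ∈ s.erase i, (X - C (y j))
  have hq : eval (y i) (derivative q) = eval (y i) q * ∑ j ∈ s.erase i, 1 / (y i - y j) := by
    rw [derivative_prod_finset, eval_finsetSum, mul_sum]
    refine sum_congr rfl fun j hj => ?_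
    have hij : y i - y j ≠ 0 := sub_ne_zero.mpr fun h => (ne_of_mem_erase hj)
      (hy (mem_of_mem_erase hj) hi h.symm)
    simp only [derivative_X_sub_C, mul_one, eval_prod, eval_sub, eval_X, eval_C, q]
    rw [← mul_prod_erase _ _ hj]
    field_simp
  simp only [derivative_mul, derivative_X_sub_C, one_mul, derivative_add, eval_add, eval_mul,
    eval_sub, eval_X, eval_C, sub_self, zero_mul, add_zero, hq]
  ring

theorem eval_hermiteOp_prod_X_sub_C {K ι : Type*} [Field K] [DecidableEq ι] (n : ℕ)
    {s : Finset ι} {y : ι → K} (hy : Set.InjOn y s) {i : ι} (hi : i ∈ s) :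
    eval (y i) (hermiteOp n (∏ j ∈ s, (X - C (y j)))) =
      eval (y i) (derivative (∏ j ∈ s, (X - C (y j)))) *
        (2 * ∑ j ∈ s.erase i, 1 / (y i - y j) - y i) := by
  rw [hermiteOp, eval_add, eval_sub, eval_mul, eval_mul, eval_prod_X_sub_C_of_mem hi, eval_X,
    mul_zero, add_zero, eval_derivative_derivative_prod_X_sub_C hy hi]
  ring

theorem forall_eval_eq_zero_iff_of_natDegree_lt [IsDomain R] {ι : Type*} [Fintype ι]
    {f : ι → R} (hf : Function.Injective f) {p : R[X]} (hp : p.natDegree < Fintype.card ι) :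
    (∀ i, eval (f i) p = 0) ↔ p = 0 :=
  ⟨fun h => eq_zero_of_natDegree_lt_card_of_eval_eq_zero p hf h hp,
    fun h i => by rw [h, eval_zero]⟩

end Polynomial

/-- For `N ≥ 1` and `y_1 > ⋯ > y_N`, the stationarity equations
`y_i/2 = ∑_{j ≠ i} 1/(y_i − y_j)` (for all `i`) hold if and only if every `y_i` is a
zero of the probabilists' Hermite polynomial `He_N` (Mathlib's `Polynomial.hermite N`). -/
theorem stationary_iff_hermite_zeros (N : ℕ) (hN : 1 ≤ N)
    (y : Fin N → ℝ)
    (hy : ∀ i j : Fin N, i < j → y j < y i) :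
    (∀ i : Fin N, y i / 2 = ∑ j ∈ Finset.univ.erase i, 1 / (y i - y j))
      ↔ (∀ i : Fin N, Polynomial.aeval (y i) (Polynomial.hermite N) = 0) := by
  have hinj : Function.Injective y := StrictAnti.injective fun i j hij => hy i j hij
  set p : ℝ[X] := ∏ j, (X - C (y j))
  set He : ℝ[X] := (hermite N).map (algebraMap ℤ ℝ)
  have hp : IsMonicOfDegree p N :=
    ⟨by simp [p, natDegree_prod_of_monic _ _ fun j _ => monic_X_sub_C (y j)],
      monic_prod_X_sub_C _ _⟩
  have hHe : IsMonicOfDegree He N :=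
    ⟨by simp [He, (hermite_monic N).natDegree_map], (hermite_monic N).map _⟩
  have hdeg : (p - He).natDegree < N := hp.natDegree_sub_lt (by omega) hHe
  have hstat (i : Fin N) : y i / 2 = ∑ j ∈ univ.erase i, 1 / (y i - y j) ↔
      eval (y i) (hermiteOp N (p - He)) = 0 := by
    have hp' : eval (y i) (derivative p) ≠ 0 := by
      rw [eval_derivative_prod_X_sub_C (mem_univ i)]
      exact prod_ne_zero_iff.mpr fun j hj =>
        sub_ne_zero.mpr (hinj.ne (ne_of_mem_erase hj).symm)
    rw [hermiteOp_sub, hermiteOp_map, hermiteOp_hermite, Polynomial.map_zero, sub_zero,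
      eval_hermiteOp_prod_X_sub_C N hinj.injOn (mem_univ i), mul_eq_zero_iff_left hp',
      sub_eq_zero]
    constructor <;> intro h <;> linarith
  have hzero (i : Fin N) : aeval (y i) (hermite N) = 0 ↔ eval (y i) (p - He) = 0 := by
    rw [eval_sub, eval_prod_X_sub_C_of_mem (mem_univ i), zero_sub, neg_eq_zero,
      eval_map_algebraMap]
  simp only [hstat, hzero]
  rw [forall_eval_eq_zero_iff_of_natDegree_lt hinj
      (by simpa using (natDegree_hermiteOp_le N _).trans_lt hdeg),
    forall_eval_eq_zero_iff_of_natDegree_lt hinj (by simpa using hdeg)]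
  exact ⟨fun h => eq_zero_of_hermiteOp_eq_zero h hdeg, fun h => by simp [h, hermiteOp]⟩
end

section
/- Let N ≥ 2 and let z ∈ ℝ^N with z_1 > … > z_N satisfy z_i = Σ_{j ≠ i} 1/(z_i − z_j) for every i = 1,…,N (i.e. z is the vector of ordered zeros of the Hermite polynomial H_N divided by √2). Then for each c > 0 the curve x(t) := √(2t + c²) · z satisfies x(0) = c·z, takes values in the open chamber {x : x_1 > … > x_N}, and solves x'(t) = H^A(x(t)) for all t ≥ 0. -/
/-!
`H^A` is homogeneous of degree `-1`, so along `x(t) = √(2t + c²) • z` we get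
`H^A(x(t)) = H^A(z) / √(2t + c²) = z / √(2t + c²)`, which is exactly the derivative of `x`.
-/

open Finset

variable {ι : Type*} [Fintype ι] [DecidableEq ι]

/-- The paper's vector field `H^A`. -/
noncomputable def fieldA (x : EuclideanSpace ℝ ι) : EuclideanSpace ℝ ι :=
  WithLp.toLp 2 fun i => ∑ j ∈ univ.erase i, 1 / (x i - x j)

theorem fieldA_apply (x : EuclideanSpace ℝ ι) (i : ι) :
    fieldA x i = ∑ j ∈ univ.erase i, 1 / (x i - x j) :=
  rfl

theorem fieldA_smul (a : ℝ) (x : EuclideanSpace ℝ ι) : fieldA (a • x) = a⁻¹ • fieldA x := by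
  ext i
  simp only [fieldA_apply, PiLp.smul_apply, smul_eq_mul, ← mul_sub, mul_sum, one_div, mul_inv]

theorem hasDerivAt_sqrt_two_mul_add {b t : ℝ} (h : 2 * t + b ≠ 0) :
    HasDerivAt (fun u => √(2 * u + b)) (√(2 * t + b))⁻¹ t := by
  have hlin : HasDerivAt (fun u : ℝ => 2 * u + b) 2 t := by
    simpa using ((hasDerivAt_id t).const_mul 2).add_const b
  refine ((Real.hasDerivAt_sqrt h).comp t hlin).congr_deriv ?_
  ring

theorem explicit_solution_A_general (N : ℕ)
    (H : EuclideanSpace ℝ (Fin N) → EuclideanSpace ℝ (Fin N))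
    (hH : ∀ x, ∀ i : Fin N, H x i = ∑ j ∈ Finset.univ.erase i, 1 / (x i - x j))
    (z : EuclideanSpace ℝ (Fin N))
    (hz : ∀ i j : Fin N, i < j → z j < z i)
    (hstat : ∀ i : Fin N, z i = ∑ j ∈ Finset.univ.erase i, 1 / (z i - z j))
    (c : ℝ) (hc : 0 < c)
    (x : ℝ → EuclideanSpace ℝ (Fin N))
    (hx : ∀ t, x t = Real.sqrt (2 * t + c ^ 2) • z) :
    x 0 = c • z
      ∧ (∀ t ≥ (0:ℝ), ∀ i j : Fin N, i < j → x t j < x t i)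
      ∧ (∀ t ≥ (0:ℝ), HasDerivAt x (H (x t)) t) := by
  have hH_eq : H = fieldA := funext fun y => PiLp.ext (hH y)
  have hz_fixed : fieldA z = z := PiLp.ext fun i => (hstat i).symm
  have hx_eq : x = fun t => √(2 * t + c ^ 2) • z := funext hx
  have hpos : ∀ t ≥ (0:ℝ), 0 < 2 * t + c ^ 2 := fun t ht => by positivity
  refine ⟨by simp [hx, Real.sqrt_sq hc.le], fun t ht i j hij => ?_, fun t ht => ?_⟩
  · simpa [hx] using mul_lt_mul_of_pos_left (hz i j hij) (Real.sqrt_pos.2 (hpos t ht))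
  · rw [hH_eq, hx t, fieldA_smul, hz_fixed, hx_eq]
    exact (hasDerivAt_sqrt_two_mul_add (hpos t ht).ne').smul_const z

/-- If `z_1 > ⋯ > z_N` satisfies `z_i = ∑_{j ≠ i} 1/(z_i − z_j)` for
all `i`, then for every `c > 0` the curve `x(t) = √(2t + c²) · z` starts at `c·z`,
stays in the open Weyl chamber of type `A` for `t ≥ 0`, and solves `x' = H^A(x)`. -/
theorem explicit_solution_A (N : ℕ) (hN : 2 ≤ N)
    (H : EuclideanSpace ℝ (Fin N) → EuclideanSpace ℝ (Fin N))
    (hH : ∀ x, ∀ i : Fin N, H x i = ∑ j ∈ Finset.univ.erase i, 1 / (x i - x j))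
    (z : EuclideanSpace ℝ (Fin N))
    (hz : ∀ i j : Fin N, i < j → z j < z i)
    (hstat : ∀ i : Fin N, z i = ∑ j ∈ Finset.univ.erase i, 1 / (z i - z j))
    (c : ℝ) (hc : 0 < c)
    (x : ℝ → EuclideanSpace ℝ (Fin N))
    (hx : ∀ t, x t = Real.sqrt (2 * t + c ^ 2) • z) :
    x 0 = c • z
      ∧ (∀ t ≥ (0:ℝ), ∀ i j : Fin N, i < j → x t j < x t i)
      ∧ (∀ t ≥ (0:ℝ), HasDerivAt x (H (x t)) t) :=
  explicit_solution_A_general N H hH z hz hstat c hc x hx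
end

section
/- Let N ≥ 2, ν > 0 and let y ∈ ℝ^N with y_1 > y_2 > … > y_N > 0. Define W(x) := 2 Σ_{1 ≤ i < j ≤ N} ln(x_i² − x_j²) + 2ν Σ_{i=1}^N ln x_i − ‖x‖²/2 on the open chamber {x ∈ ℝ^N : x_1 > … > x_N > 0}. Then W(x) ≤ W(y) for all x in the open chamber (i.e. W is maximal at y) if and only if y_i/2 = Σ_{j ≠ i} (1/(y_i − y_j) + 1/(y_i + y_j)) + ν/y_i for every i = 1,…,N. -/
/-!
Each `ln (x_i² - x_j²) = ln (x_i - x_j) + ln (x_i + x_j)` is a sum of logarithms of positive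
linear forms on the chamber, so `W` is concave there and lies below its tangent hyperplanes:
`W x ≤ W y + ⟪∇W y, x - y⟫`. Hence a critical point is a global maximum. Conversely, the chamber
is open, so a maximum is a critical point, and
`∂ᵢW y = 2 (∑_{j ≠ i} (1/(yᵢ - yⱼ) + 1/(yᵢ + yⱼ)) + ν/yᵢ) - yᵢ`.
-/

open Finset Real

theorem sum_filter_lt_add_swap {ι M : Type*} [Fintype ι] [LinearOrder ι] [AddCommMonoid M]
    (G : ι → ι → M) :
    ∑ p ∈ univ.filter (fun p : ι × ι => p.1 < p.2), (G p.1 p.2 + G p.2 p.1)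
      = ∑ i, ∑ j ∈ univ.erase i, G i j := by
  have hswap : ∑ p ∈ univ.filter (fun p : ι × ι => p.1 < p.2), G p.2 p.1
      = ∑ p ∈ univ.filter (fun p : ι × ι => p.2 < p.1), G p.1 p.2 :=
    sum_nbij' Prod.swap Prod.swap (by simp) (by simp) (by simp) (by simp) (by simp)
  rw [sum_add_distrib, hswap, ← sum_union (disjoint_filter.2 fun p _ h => lt_asymm h),
    ← filter_or, sum_filter, Fintype.sum_prod_type]
  refine sum_congr rfl fun i _ => ?_
  rw [← filter_ne', sum_filter]
  simp only [ne_comm (b := i), lt_or_lt_iff_ne]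

theorem log_le_log_add_sub_div {a b : ℝ} (ha : 0 < a) (hb : 0 < b) :
    log a ≤ log b + (a - b) / b := by
  have h := log_le_sub_one_of_pos (div_pos ha hb)
  rw [log_div ha.ne' hb.ne', div_sub_one hb.ne'] at h
  linarith

theorem log_sq_sub_sq_le {a b c e : ℝ} (hab : |b| < a) (hce : |e| < c) :
    log (c ^ 2 - e ^ 2)
      ≤ log (a ^ 2 - b ^ 2) + (2 * a * (c - a) - 2 * b * (e - b)) / (a ^ 2 - b ^ 2) := by
  obtain ⟨hab₁, hab₂⟩ := abs_lt.1 hab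
  obtain ⟨hce₁, hce₂⟩ := abs_lt.1 hce
  have hsub : 0 < a - b := by linarith
  have hadd : 0 < a + b := by linarith
  have hfac (u v : ℝ) : u ^ 2 - v ^ 2 = (u - v) * (u + v) := by ring
  rw [hfac c e, hfac a b, log_mul (by linarith) (by linarith), log_mul hsub.ne' hadd.ne']
  have h₁ := log_le_log_add_sub_div (a := c - e) (by linarith) hsub
  have h₂ := log_le_log_add_sub_div (a := c + e) (by linarith) hadd
  have hsplit : (c - e - (a - b)) / (a - b) + (c + e - (a + b)) / (a + b)
      = (2 * a * (c - a) - 2 * b * (e - b)) / ((a - b) * (a + b)) := by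
    field_simp; ring
  linarith

noncomputable section

variable {ι : Type*} [LinearOrder ι]

variable (ι) in
def weylChamberB : Set (EuclideanSpace ℝ ι) :=
  {x | (∀ i j, i < j → x j < x i) ∧ ∀ i, 0 < x i}

theorem abs_lt_of_mem_weylChamberB {y : EuclideanSpace ℝ ι} (hy : y ∈ weylChamberB ι) {i j : ι}
    (hij : i < j) : |y j| < y i := by
  rw [abs_of_pos (hy.2 j)]
  exact hy.1 i j hij

variable [Fintype ι]

theorem isOpen_weylChamberB : IsOpen (weylChamberB ι) := by
  have hcoord (i : ι) : Continuous fun x : EuclideanSpace ℝ ι => x i := PiLp.continuous_apply 2 _ i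
  simp only [weylChamberB, Set.ofPred_and, Set.ofPred_forall]
  exact (isOpen_iInter_of_finite fun i => isOpen_iInter_of_finite fun j =>
    isOpen_iInter_of_finite fun _ => isOpen_lt (hcoord j) (hcoord i)).inter
    (isOpen_iInter_of_finite fun i => isOpen_lt continuous_const (hcoord i))

def logGasB (ν : ℝ) (x : EuclideanSpace ℝ ι) : ℝ :=
  2 * (∑ p ∈ univ.filter (fun p : ι × ι => p.1 < p.2), log (x p.1 ^ 2 - x p.2 ^ 2))
    + 2 * ν * (∑ i, log (x i)) - ‖x‖ ^ 2 / 2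

def logGasBDeriv (ν : ℝ) (y v : EuclideanSpace ℝ ι) : ℝ :=
  2 * (∑ p ∈ univ.filter (fun p : ι × ι => p.1 < p.2),
      (2 * y p.1 * v p.1 - 2 * y p.2 * v p.2) / (y p.1 ^ 2 - y p.2 ^ 2))
    + 2 * ν * (∑ i, v i / y i) - inner ℝ y v

def logGasBGrad (ν : ℝ) (y : EuclideanSpace ℝ ι) (i : ι) : ℝ :=
  2 * ((∑ j ∈ univ.erase i, (1 / (y i - y j) + 1 / (y i + y j))) + ν / y i) - y i

theorem logGasB_le_add_deriv {ν : ℝ} (hν : 0 ≤ ν) {x y : EuclideanSpace ℝ ι}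
    (hx : x ∈ weylChamberB ι) (hy : y ∈ weylChamberB ι) :
    logGasB ν x ≤ logGasB ν y + logGasBDeriv ν y (x - y) := by
  have hpairs : ∑ p ∈ univ.filter (fun p : ι × ι => p.1 < p.2), log (x p.1 ^ 2 - x p.2 ^ 2)
      ≤ ∑ p ∈ univ.filter (fun p : ι × ι => p.1 < p.2), (log (y p.1 ^ 2 - y p.2 ^ 2)
        + (2 * y p.1 * (x - y) p.1 - 2 * y p.2 * (x - y) p.2) / (y p.1 ^ 2 - y p.2 ^ 2)) := by
    refine sum_le_sum fun p hp => ?_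
    have hlt := (mem_filter.1 hp).2
    exact log_sq_sub_sq_le (abs_lt_of_mem_weylChamberB hy hlt) (abs_lt_of_mem_weylChamberB hx hlt)
  have hlogs : ∑ i, log (x i) ≤ ∑ i, (log (y i) + (x - y) i / y i) :=
    sum_le_sum fun i _ => log_le_log_add_sub_div (hx.2 i) (hy.2 i)
  have hnorm : ‖x‖ ^ 2 = ‖y‖ ^ 2 + 2 * inner ℝ y (x - y) + ‖x - y‖ ^ 2 := by
    rw [← norm_add_sq_real, add_sub_cancel]
  rw [sum_add_distrib] at hpairs hlogs
  unfold logGasB logGasBDeriv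
  nlinarith [sq_nonneg ‖x - y‖]

theorem hasDerivAt_logGasB_line (ν : ℝ) {y : EuclideanSpace ℝ ι} (hy : y ∈ weylChamberB ι)
    (v : EuclideanSpace ℝ ι) :
    HasDerivAt (fun t : ℝ => logGasB ν (y + t • v)) (logGasBDeriv ν y v) 0 := by
  have hcoord (i : ι) : HasDerivAt (fun t : ℝ => (y + t • v) i) (v i) 0 := by
    simpa using ((hasDerivAt_id (0 : ℝ)).mul_const (v i)).const_add (y i)
  have hpairs : HasDerivAt
      (fun t : ℝ => ∑ p ∈ univ.filter (fun p : ι × ι => p.1 < p.2),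
        log ((y + t • v) p.1 ^ 2 - (y + t • v) p.2 ^ 2))
      (∑ p ∈ univ.filter (fun p : ι × ι => p.1 < p.2),
        (2 * y p.1 * v p.1 - 2 * y p.2 * v p.2) / (y p.1 ^ 2 - y p.2 ^ 2)) 0 := by
    refine HasDerivAt.fun_sum fun p hp => ?_
    have hpos : 0 < y p.1 ^ 2 - y p.2 ^ 2 := by
      have := abs_lt_of_mem_weylChamberB hy (mem_filter.1 hp).2
      nlinarith [abs_nonneg (y p.2), sq_abs (y p.2)]
    refine (((hcoord p.1).fun_pow 2).fun_sub ((hcoord p.2).fun_pow 2)).log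
      (by simpa using hpos.ne') |>.congr_deriv ?_
    simp only [zero_smul, add_zero]
    ring
  have hlogs : HasDerivAt (fun t : ℝ => ∑ i, log ((y + t • v) i)) (∑ i, v i / y i) 0 :=
    HasDerivAt.fun_sum fun i _ => by
      simpa using (hcoord i).log (by simpa using (hy.2 i).ne')
  have hnorm : HasDerivAt (fun t : ℝ => ‖y + t • v‖ ^ 2) (2 * inner ℝ y v) 0 := by
    simpa using (((hasDerivAt_id (0 : ℝ)).smul_const v).const_add y).norm_sq
  refine (((hpairs.const_mul 2).fun_add (hlogs.const_mul (2 * ν))).fun_sub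
    (hnorm.div_const 2)).congr_deriv ?_
  rw [logGasBDeriv]
  ring

theorem logGasBDeriv_eq_sum_grad (ν : ℝ) {y : EuclideanSpace ℝ ι} (hy : y ∈ weylChamberB ι)
    (v : EuclideanSpace ℝ ι) :
    logGasBDeriv ν y v = ∑ i, v i * logGasBGrad ν y i := by
  have hpair : ∀ p ∈ univ.filter (fun p : ι × ι => p.1 < p.2),
      (2 * y p.1 * v p.1 - 2 * y p.2 * v p.2) / (y p.1 ^ 2 - y p.2 ^ 2)
        = v p.1 * (1 / (y p.1 - y p.2) + 1 / (y p.1 + y p.2))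
          + v p.2 * (1 / (y p.2 - y p.1) + 1 / (y p.2 + y p.1)) := by
    intro p hp
    have hlt := abs_lt_of_mem_weylChamberB hy (mem_filter.1 hp).2
    obtain ⟨h₁, h₂⟩ := abs_lt.1 hlt
    have : y p.1 - y p.2 ≠ 0 := by linarith
    have : y p.2 - y p.1 ≠ 0 := by linarith
    have : y p.1 + y p.2 ≠ 0 := by linarith
    have : y p.2 + y p.1 ≠ 0 := by linarith
    have : y p.1 ^ 2 - y p.2 ^ 2 ≠ 0 := by nlinarith
    field_simp; ring
  rw [logGasBDeriv, sum_congr rfl hpair,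
    sum_filter_lt_add_swap fun i j => v i * (1 / (y i - y j) + 1 / (y i + y j)),
    PiLp.inner_apply]
  simp only [logGasBGrad, mul_sub, mul_add, sum_sub_distrib, sum_add_distrib, mul_sum,
    mul_div_assoc']
  simp [mul_comm, mul_left_comm, div_eq_mul_inv]

theorem logGasBGrad_eq_zero_of_isLocalMax {ν : ℝ} {y : EuclideanSpace ℝ ι}
    (hy : y ∈ weylChamberB ι) (hmax : IsLocalMax (logGasB ν) y) (i : ι) :
    logGasBGrad ν y i = 0 := by
  let line : ℝ → EuclideanSpace ℝ ι := fun t => y + t • EuclideanSpace.single i 1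
  have hline : IsLocalMax (logGasB ν ∘ line) 0 :=
    IsLocalMax.comp_continuous (by rwa [show line 0 = y by simp [line]]) (by fun_prop)
  have hderiv := hline.hasDerivAt_eq_zero (hasDerivAt_logGasB_line ν hy _)
  simpa [logGasBDeriv_eq_sum_grad ν hy] using hderiv

end

theorem W_max_iff_stationary_B_general (N : ℕ) (ν : ℝ) (hν : 0 < ν)
    (y : EuclideanSpace ℝ (Fin N))
    (hy : (∀ i j : Fin N, i < j → y j < y i) ∧ ∀ i, 0 < y i)
    (W : EuclideanSpace ℝ (Fin N) → ℝ)
    (hW : ∀ x, W x = 2 * (∑ p ∈ Finset.univ.filter (fun p : Fin N × Fin N => p.1 < p.2),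
          Real.log (x p.1 ^ 2 - x p.2 ^ 2))
        + 2 * ν * (∑ i, Real.log (x i)) - ‖x‖ ^ 2 / 2) :
    (∀ x : EuclideanSpace ℝ (Fin N),
        ((∀ i j : Fin N, i < j → x j < x i) ∧ ∀ i, 0 < x i) → W x ≤ W y)
      ↔ (∀ i : Fin N, y i / 2
          = (∑ j ∈ Finset.univ.erase i, (1 / (y i - y j) + 1 / (y i + y j))) + ν / y i) := by
  obtain rfl : W = logGasB ν := funext hW
  have hgrad_iff : ∀ i, logGasBGrad ν y i = 0 ↔
      y i / 2 = (∑ j ∈ univ.erase i, (1 / (y i - y j) + 1 / (y i + y j))) + ν / y i := by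
    intro i
    rw [logGasBGrad]
    constructor <;> intro h <;> linarith
  simp only [← hgrad_iff]
  constructor
  · intro hmax
    exact logGasBGrad_eq_zero_of_isLocalMax hy
      (IsMaxOn.isLocalMax hmax (isOpen_weylChamberB.mem_nhds hy))
  · intro hgrad x hx
    calc logGasB ν x ≤ logGasB ν y + logGasBDeriv ν y (x - y) :=
          logGasB_le_add_deriv hν.le hx hy
      _ = logGasB ν y := by simp [logGasBDeriv_eq_sum_grad ν hy, hgrad]

/-- For `N ≥ 2`, `ν > 0` and `y` in the open Weyl chamber of type `B`,
the function `W(x) = 2 ∑_{i<j} ln(x_i² − x_j²) + 2ν ∑_i ln x_i − ‖x‖²/2` is maximal at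
`y` (among points of the open chamber) if and only if
`y_i/2 = ∑_{j ≠ i} (1/(y_i − y_j) + 1/(y_i + y_j)) + ν/y_i` for all `i`. -/
theorem W_max_iff_stationary_B (N : ℕ) (hN : 2 ≤ N) (ν : ℝ) (hν : 0 < ν)
    (y : EuclideanSpace ℝ (Fin N))
    (hy : (∀ i j : Fin N, i < j → y j < y i) ∧ ∀ i, 0 < y i)
    (W : EuclideanSpace ℝ (Fin N) → ℝ)
    (hW : ∀ x, W x = 2 * (∑ p ∈ Finset.univ.filter (fun p : Fin N × Fin N => p.1 < p.2),
          Real.log (x p.1 ^ 2 - x p.2 ^ 2))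
        + 2 * ν * (∑ i, Real.log (x i)) - ‖x‖ ^ 2 / 2) :
    (∀ x : EuclideanSpace ℝ (Fin N),
        ((∀ i j : Fin N, i < j → x j < x i) ∧ ∀ i, 0 < x i) → W x ≤ W y)
      ↔ (∀ i : Fin N, y i / 2
          = (∑ j ∈ Finset.univ.erase i, (1 / (y i - y j) + 1 / (y i + y j))) + ν / y i) :=
  W_max_iff_stationary_B_general N ν hν y hy W hW
end

section
/- Let N ≥ 1, ν > 0 and let y ∈ ℝ^N with y_1 > y_2 > … > y_N > 0. Then y_i/2 = Σ_{j ≠ i} (1/(y_i − y_j) + 1/(y_i + y_j)) + ν/y_i holds for every i = 1,…,N if and only if L_N^{(ν−1)}(y_i²/2) = 0 for every i = 1,…,N (equivalently, the numbers y_1²/2 > … > y_N²/2 are exactly the N ordered zeros of the generalized Laguerre polynomial L_N^{(ν−1)}). -/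
/-- The generalized Laguerre polynomial
`L_n^{(α)}(x) = ∑_{k=0}^n binom(n+α, n−k) · (−x)^k / k!`, where
`binom(n+α, n−k) = ((α+k+1)(α+k+2)⋯(α+n))/(n−k)!`. -/
noncomputable def laguerre (n : ℕ) (α : ℝ) (x : ℝ) : ℝ :=
  ∑ k ∈ Finset.range (n + 1),
    ((∏ m ∈ Finset.Ico k n, (α + (m : ℝ) + 1)) / ((n - k).factorial : ℝ))
      * ((-x) ^ k / (k.factorial : ℝ))

/-!
Put `x_i = y_i² / 2`. Since `y_i (1/(y_i - y_j) + 1/(y_i + y_j)) = 2 x_i / (x_i - x_j)`, the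
stationarity equations become Stieltjes' equilibrium conditions
`2 x_i ∑_{j ≠ i} 1/(x_i - x_j) + ν = x_i`. For `P = ∏ (X - x_i)` we have
`P''(x_i) = 2 P'(x_i) ∑_{j ≠ i} 1/(x_i - x_j)` with `P'(x_i) ≠ 0`, so these conditions say
that `x P'' + (ν - x) P' + N P`, a polynomial of degree `< N`, vanishes at the `N` nodes, i.e. is
zero.
The coefficient recurrence of this Laguerre equation shows that its only monic solution of degree
`N` is `(-1)^N N! L_N^{(ν-1)}`, and `P` equals that polynomial iff the `x_i` are its zeros.
-/

open Polynomial Finset Lagrange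

theorem Polynomial.degree_sub_lt_of_coeff_eq {R : Type*} [Ring R] {p q : R[X]} {n : ℕ}
    (hp : p.natDegree ≤ n) (hq : q.natDegree ≤ n) (h : p.coeff n = q.coeff n) :
    (p - q).degree < n := by
  rw [degree_lt_iff_coeff_zero]
  intro k hk
  rw [coeff_sub, sub_eq_zero]
  rcases hk.eq_or_lt with rfl | hlt
  · exact h
  · rw [coeff_eq_zero_of_natDegree_lt (hp.trans_lt hlt),
      coeff_eq_zero_of_natDegree_lt (hq.trans_lt hlt)]

theorem Lagrange.coeff_nodal_card {R ι : Type*} [CommRing R] [Nontrivial R] (s : Finset ι)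
    (v : ι → R) : (nodal s v).coeff #s = 1 := by
  simpa only [natDegree_nodal] using (nodal_monic (s := s) (v := v)).coeff_natDegree

section Nodal

variable {K ι : Type*} [Field K] [DecidableEq ι] {s : Finset ι} {v : ι → K}

theorem Lagrange.eval_derivative_nodal_of_ne {a : K} (ha : ∀ j ∈ s, a ≠ v j) :
    (derivative (nodal s v)).eval a = (nodal s v).eval a * ∑ j ∈ s, (a - v j)⁻¹ := by
  rw [derivative_nodal, eval_finsetSum, mul_sum]
  refine sum_congr rfl fun j hj => ?_
  rw [nodal_eq_mul_nodal_erase hj, eval_mul, eval_sub, eval_X, eval_C,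
    mul_comm (a - v j), mul_assoc, mul_inv_cancel₀ (sub_ne_zero.2 (ha j hj)), mul_one]

theorem Lagrange.eval_derivative_derivative_nodal_at_node (hv : Set.InjOn v s) {i : ι}
    (hi : i ∈ s) :
    (derivative (derivative (nodal s v))).eval (v i)
      = 2 * (nodal (s.erase i) v).eval (v i) * ∑ j ∈ s.erase i, (v i - v j)⁻¹ := by
  have hne : ∀ j ∈ s.erase i, v i ≠ v j := fun j hj h =>
    (mem_erase.1 hj).1 (hv (mem_erase.1 hj).2 hi h.symm)
  rw [nodal_eq_mul_nodal_erase hi, derivative_mul, derivative_X_sub_C, one_mul,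
    derivative_add, derivative_mul, derivative_X_sub_C, one_mul]
  simp only [eval_add, eval_mul, eval_sub, eval_X, eval_C, sub_self, zero_mul, add_zero,
    eval_derivative_nodal_of_ne hne]
  ring

end Nodal

section LaguerreOperator

variable {R : Type*} [CommRing R]

noncomputable def laguerreOp (n : ℕ) (α : R) : R[X] →ₗ[R] R[X] :=
  LinearMap.mulLeft R X ∘ₗ derivative ∘ₗ derivative
    + LinearMap.mulLeft R (C (α + 1) - X) ∘ₗ derivative + (n : R) • LinearMap.id

theorem laguerreOp_apply (n : ℕ) (α : R) (p : R[X]) :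
    laguerreOp n α p
      = X * derivative (derivative p) + (C (α + 1) - X) * derivative p + C (n : R) * p := by
  simp [laguerreOp, smul_eq_C_mul]

theorem coeff_laguerreOp (n : ℕ) (α : R) (p : R[X]) (k : ℕ) :
    (laguerreOp n α p).coeff k
      = (k + 1) * (k + α + 1) * p.coeff (k + 1) + (n - k) * p.coeff k := by
  rw [laguerreOp_apply]
  rcases k with _ | k
  · simp only [coeff_add, mul_coeff_zero, coeff_X_zero, zero_mul, sub_mul, coeff_sub,
      coeff_derivative, coeff_C_zero]
    push_cast
    ring
  · simp only [coeff_add, coeff_X_mul, sub_mul, coeff_sub, coeff_C_mul, coeff_derivative]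
    push_cast
    ring

theorem degree_laguerreOp_lt {n : ℕ} (α : R) {p : R[X]} (hp : p.natDegree ≤ n) :
    (laguerreOp n α p).degree < n := by
  rw [degree_lt_iff_coeff_zero]
  intro k hk
  rw [coeff_laguerreOp, coeff_eq_zero_of_natDegree_lt (by omega : p.natDegree < k + 1), mul_zero,
    zero_add]
  rcases hk.eq_or_lt with rfl | hlt
  · rw [sub_self, zero_mul]
  · rw [coeff_eq_zero_of_natDegree_lt (hp.trans_lt hlt), mul_zero]

/-- The coefficient recurrence of `laguerreOp n α p = 0` determines `p` downwards from degree
`n`: the factor `n - k` in front of `p.coeff k` vanishes only at `k = n`. -/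
theorem eq_zero_of_laguerreOp_eq_zero [IsDomain R] [CharZero R] {n : ℕ} {α : R} {p : R[X]}
    (hp : laguerreOp n α p = 0) (hdeg : p.degree < n) : p = 0 := by
  have key : ∀ d k, n ≤ k + d → p.coeff k = 0 := by
    intro d
    induction d with
    | zero => exact fun k hk => coeff_eq_zero_of_degree_lt (hdeg.trans_le (by exact_mod_cast hk))
    | succ d ih =>
      intro k hk
      rcases le_or_gt n k with hnk | hkn
      · exact coeff_eq_zero_of_degree_lt (hdeg.trans_le (by exact_mod_cast hnk))
      have hrec := congrArg (coeff · k) hp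
      simp only [coeff_laguerreOp, coeff_zero, ih (k + 1) (by omega), mul_zero, zero_add] at hrec
      exact (mul_eq_zero.1 hrec).resolve_left
        (sub_ne_zero.2 (Nat.cast_injective.ne hkn.ne'))
  exact Polynomial.ext fun k => (key n k (by omega)).trans (coeff_zero k).symm

end LaguerreOperator

section LaguerrePolynomial

variable {K : Type*} [Field K]

noncomputable def laguerreCoeff (n : ℕ) (α : K) (k : ℕ) : K :=
  (∏ m ∈ Ico k n, (α + m + 1)) / (n - k).factorial * ((-1) ^ k / k.factorial)

noncomputable def laguerrePoly (n : ℕ) (α : K) : K[X] :=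
  ∑ k ∈ range (n + 1), C (laguerreCoeff n α k) * X ^ k

theorem coeff_laguerrePoly (n : ℕ) (α : K) (k : ℕ) :
    (laguerrePoly n α).coeff k = if k ≤ n then laguerreCoeff n α k else 0 := by
  simp [laguerrePoly, coeff_C_mul, coeff_X_pow]

theorem natDegree_laguerrePoly_le (n : ℕ) (α : K) : (laguerrePoly n α).natDegree ≤ n :=
  natDegree_le_iff_coeff_eq_zero.2 fun k hk => by
    rw [coeff_laguerrePoly, if_neg hk.not_ge]

theorem coeff_laguerrePoly_self [CharZero K] (n : ℕ) (α : K) :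
    (laguerrePoly n α).coeff n = (-1) ^ n / n.factorial := by
  simp [coeff_laguerrePoly, laguerreCoeff]

theorem laguerreCoeff_succ [CharZero K] {n k : ℕ} (α : K) (hk : k < n) :
    (k + 1) * (k + α + 1) * laguerreCoeff n α (k + 1) = (k - n) * laguerreCoeff n α k := by
  have hprod :
      ∏ m ∈ Ico k n, (α + m + 1) = (α + k + 1) * ∏ m ∈ Ico (k + 1) n, (α + m + 1) :=
    prod_eq_prod_Ico_succ_bot hk _
  obtain ⟨d, rfl⟩ : ∃ d, n = k + 1 + d := ⟨n - (k + 1), by omega⟩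
  have hsub : k + 1 + d - k = d + 1 := by omega
  rw [laguerreCoeff, laguerreCoeff, hprod, hsub, Nat.add_sub_cancel_left, Nat.factorial_succ d,
    Nat.factorial_succ k]
  push_cast
  have hk1 : (k : K) + 1 ≠ 0 := Nat.cast_add_one_ne_zero k
  have hd1 : (d : K) + 1 ≠ 0 := Nat.cast_add_one_ne_zero d
  field_simp
  ring

theorem laguerreOp_laguerrePoly [CharZero K] (n : ℕ) (α : K) :
    laguerreOp n α (laguerrePoly n α) = 0 := by
  ext k
  rw [coeff_laguerreOp, coeff_laguerrePoly, coeff_laguerrePoly, coeff_zero]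
  rcases lt_trichotomy k n with hk | rfl | hk
  · rw [if_pos (show k + 1 ≤ n from hk), if_pos hk.le, laguerreCoeff_succ α hk]
    ring
  · simp
  · rw [if_neg (by omega), if_neg hk.not_ge]
    ring

theorem eval_laguerrePoly (n : ℕ) (α x : ℝ) :
    (laguerrePoly n α).eval x = laguerre n α x := by
  simp only [laguerrePoly, laguerre, laguerreCoeff, eval_finsetSum, eval_mul, eval_C, eval_pow,
    eval_X, neg_pow x]
  refine sum_congr rfl fun k _ => by ring

end LaguerrePolynomial

section MonicLaguerre

variable {K : Type*} [Field K]

noncomputable def monicLaguerrePoly (n : ℕ) (α : K) : K[X] :=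
  C ((-1) ^ n * n.factorial : K) * laguerrePoly n α

theorem natDegree_monicLaguerrePoly_le (n : ℕ) (α : K) :
    (monicLaguerrePoly n α).natDegree ≤ n :=
  natDegree_C_mul_le _ _ |>.trans (natDegree_laguerrePoly_le n α)

variable [CharZero K]

theorem coeff_monicLaguerrePoly_self (n : ℕ) (α : K) : (monicLaguerrePoly n α).coeff n = 1 := by
  rw [monicLaguerrePoly, coeff_C_mul, coeff_laguerrePoly_self, mul_div_assoc', mul_comm,
    ← mul_assoc, ← pow_add, ← two_mul, pow_mul, neg_one_sq, one_pow, one_mul,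
    div_self (Nat.cast_ne_zero.2 n.factorial_ne_zero)]

theorem eval_monicLaguerrePoly_eq_zero_iff (n : ℕ) (α x : K) :
    (monicLaguerrePoly n α).eval x = 0 ↔ (laguerrePoly n α).eval x = 0 := by
  rw [monicLaguerrePoly, eval_mul, eval_C, mul_eq_zero,
    or_iff_right (mul_ne_zero (pow_ne_zero _ (neg_ne_zero.2 one_ne_zero))
      (Nat.cast_ne_zero.2 n.factorial_ne_zero))]

theorem laguerreOp_monicLaguerrePoly (n : ℕ) (α : K) :
    laguerreOp n α (monicLaguerrePoly n α) = 0 := by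
  rw [monicLaguerrePoly, ← smul_eq_C_mul, map_smul, laguerreOp_laguerrePoly, smul_zero]

theorem laguerreOp_eq_zero_iff_eq_monicLaguerrePoly {n : ℕ} {α : K} {p : K[X]}
    (hp : p.natDegree ≤ n) (hlead : p.coeff n = 1) :
    laguerreOp n α p = 0 ↔ p = monicLaguerrePoly n α := by
  refine ⟨fun h => sub_eq_zero.1 (eq_zero_of_laguerreOp_eq_zero (n := n) (α := α) ?_ ?_),
    fun h => ?_⟩
  · rw [map_sub, h, laguerreOp_monicLaguerrePoly, sub_zero]
  · exact degree_sub_lt_of_coeff_eq hp (natDegree_monicLaguerrePoly_le n α)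
      (hlead.trans (coeff_monicLaguerrePoly_self n α).symm)
  · rw [h, laguerreOp_monicLaguerrePoly]

end MonicLaguerre

section Stieltjes

variable {K ι : Type*} [Field K] {s : Finset ι} {v : ι → K}

theorem nodal_eq_monicLaguerrePoly_iff [CharZero K] (hv : Set.InjOn v s) (α : K) :
    nodal s v = monicLaguerrePoly #s α ↔ ∀ i ∈ s, (laguerrePoly #s α).eval (v i) = 0 := by
  refine ⟨fun h i hi => ?_, fun h => ?_⟩
  · rw [← eval_monicLaguerrePoly_eq_zero_iff, ← h, eval_nodal_at_node hi]
  · refine eq_of_degree_sub_lt_of_eval_index_eq _ hv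
      (degree_sub_lt_of_coeff_eq natDegree_nodal.le
        (natDegree_monicLaguerrePoly_le _ α)
        ((coeff_nodal_card s v).trans (coeff_monicLaguerrePoly_self _ α).symm))
      fun i hi => ?_
    rw [eval_nodal_at_node hi, (eval_monicLaguerrePoly_eq_zero_iff _ α _).2 (h i hi)]

variable [DecidableEq ι]

theorem eval_laguerreOp_nodal_at_node (hv : Set.InjOn v s) (n : ℕ) (α : K) {i : ι}
    (hi : i ∈ s) :
    (laguerreOp n α (nodal s v)).eval (v i)
      = (nodal (s.erase i) v).eval (v i)
        * (2 * v i * ∑ j ∈ s.erase i, (v i - v j)⁻¹ + (α + 1) - v i) := by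
  simp only [laguerreOp_apply, eval_add, eval_mul, eval_sub, eval_X, eval_C,
    eval_nodal_at_node hi, eval_nodal_derivative_eval_node_eq hi,
    eval_derivative_derivative_nodal_at_node hv hi]
  ring

theorem laguerreOp_nodal_eq_zero_iff (hv : Set.InjOn v s) (α : K) :
    laguerreOp #s α (nodal s v) = 0
      ↔ ∀ i ∈ s, 2 * v i * ∑ j ∈ s.erase i, (v i - v j)⁻¹ + (α + 1) = v i := by
  refine ⟨fun h i hi => ?_, fun h => ?_⟩
  · have hnode := congrArg (eval (v i)) h
    rw [eval_laguerreOp_nodal_at_node hv _ α hi, eval_zero] at hnode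
    refine sub_eq_zero.1 ((mul_eq_zero.1 hnode).resolve_left ?_)
    refine eval_nodal_not_at_node fun j hj heq => (mem_erase.1 hj).1 ?_
    exact hv (mem_erase.1 hj).2 hi heq.symm
  · refine eq_zero_of_degree_lt_of_eval_index_eq_zero _ hv
      (degree_laguerreOp_lt α natDegree_nodal.le) fun i hi => ?_
    rw [eval_laguerreOp_nodal_at_node hv _ α hi, sub_eq_zero.2 (h i hi), mul_zero]

theorem stieltjes_laguerre [CharZero K] (hv : Set.InjOn v s) (α : K) :
    (∀ i ∈ s, 2 * v i * ∑ j ∈ s.erase i, (v i - v j)⁻¹ + (α + 1) = v i)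
      ↔ ∀ i ∈ s, (laguerrePoly #s α).eval (v i) = 0 := by
  rw [← laguerreOp_nodal_eq_zero_iff hv,
    laguerreOp_eq_zero_iff_eq_monicLaguerrePoly natDegree_nodal.le
      (coeff_nodal_card s v),
    nodal_eq_monicLaguerrePoly_iff hv]

end Stieltjes

theorem mul_one_div_sub_add_one_div_add {K : Type*} [Field K] [NeZero (2 : K)] {a b : K}
    (hsub : a - b ≠ 0) (hadd : a + b ≠ 0) :
    a * (1 / (a - b) + 1 / (a + b)) = 2 * (a ^ 2 / 2) * (a ^ 2 / 2 - b ^ 2 / 2)⁻¹ := by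
  have hsq : a ^ 2 / 2 - b ^ 2 / 2 = (a - b) * (a + b) / 2 := by ring
  rw [hsq]
  field_simp
  ring

theorem div_two_eq_sum_add_div_iff {K ι : Type*} [Field K] [NeZero (2 : K)] {t : Finset ι} {a : K}
    {b : ι → K} (ν : K)
    (ha : a ≠ 0) (hb : ∀ j ∈ t, a - b j ≠ 0 ∧ a + b j ≠ 0) :
    a / 2 = ∑ j ∈ t, (1 / (a - b j) + 1 / (a + b j)) + ν / a
      ↔ 2 * (a ^ 2 / 2) * ∑ j ∈ t, (a ^ 2 / 2 - b j ^ 2 / 2)⁻¹ + ν = a ^ 2 / 2 := by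
  have hsum : a * ∑ j ∈ t, (1 / (a - b j) + 1 / (a + b j))
      = 2 * (a ^ 2 / 2) * ∑ j ∈ t, (a ^ 2 / 2 - b j ^ 2 / 2)⁻¹ := by
    rw [mul_sum, mul_sum]
    exact sum_congr rfl fun j hj => mul_one_div_sub_add_one_div_add (hb j hj).1 (hb j hj).2
  rw [← mul_right_inj' ha, mul_add, hsum, mul_div_cancel₀ _ ha,
    show a * (a / 2) = a ^ 2 / 2 by ring, eq_comm]

theorem stationary_iff_laguerre_zeros_B_general (N : ℕ) (ν : ℝ)
    (y : Fin N → ℝ)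
    (hy : (∀ i j : Fin N, i < j → y j < y i) ∧ ∀ i, 0 < y i) :
    (∀ i : Fin N, y i / 2
        = (∑ j ∈ Finset.univ.erase i, (1 / (y i - y j) + 1 / (y i + y j))) + ν / y i)
      ↔ (∀ i : Fin N, laguerre N (ν - 1) (y i ^ 2 / 2) = 0) := by
  obtain ⟨hanti, hpos⟩ := hy
  have hy_inj : Function.Injective y := StrictAnti.injective hanti
  have hx_inj : Function.Injective fun i => y i ^ 2 / 2 := fun i j h =>
    hy_inj <| (sq_eq_sq₀ (hpos i).le (hpos j).le).1 (by simpa using h)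
  have hstieltjes := stieltjes_laguerre hx_inj.injOn (s := univ) (ν - 1)
  simp only [card_univ, Fintype.card_fin, sub_add_cancel, mem_univ, forall_const,
    eval_laguerrePoly] at hstieltjes
  rw [← hstieltjes]
  refine forall_congr' fun i => div_two_eq_sum_add_div_iff ν (hpos i).ne' fun j hj => ?_
  exact ⟨sub_ne_zero.2 (hy_inj.ne (mem_erase.1 hj).1).symm, (add_pos (hpos i) (hpos j)).ne'⟩

/-- For `N ≥ 1`, `ν > 0` and `y_1 > ⋯ > y_N > 0`, the stationarity
equations `y_i/2 = ∑_{j ≠ i} (1/(y_i − y_j) + 1/(y_i + y_j)) + ν/y_i` (for all `i`)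
hold if and only if `L_N^{(ν−1)}(y_i²/2) = 0` for every `i`. -/
theorem stationary_iff_laguerre_zeros_B (N : ℕ) (hN : 1 ≤ N) (ν : ℝ) (hν : 0 < ν)
    (y : Fin N → ℝ)
    (hy : (∀ i j : Fin N, i < j → y j < y i) ∧ ∀ i, 0 < y i) :
    (∀ i : Fin N, y i / 2
        = (∑ j ∈ Finset.univ.erase i, (1 / (y i - y j) + 1 / (y i + y j))) + ν / y i)
      ↔ (∀ i : Fin N, laguerre N (ν - 1) (y i ^ 2 / 2) = 0) :=
  stationary_iff_laguerre_zeros_B_general N ν y hy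
end

section
/- Let N ≥ 2 and define W_D(x) := 2 Σ_{1 ≤ i < j ≤ N} ln(x_i² − x_j²) − ‖x‖²/2 on the interior {x ∈ ℝ^N : x_1 > … > x_{N−1} > |x_N|} of the Weyl chamber C_N^D. Then W_D attains a global maximum on this interior: there exists y with y_1 > … > y_{N−1} > |y_N| such that W_D(x) ≤ W_D(y) for all x with x_1 > … > x_{N−1} > |x_N|. -/
/-!
The type `D` chamber is cut out of a closed cone by the strict inequalities
`x_j² < x_i²` (`i < j`), so `W_D` is a logarithmic barrier `2 ∑ log g_p - ‖x‖²/2` with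
each `g_p ≤ ‖x‖²`. Since `log` grows slower than `‖x‖²/2`, the barrier tends to `-∞` at
infinity, and on a ball it tends to `-∞` wherever some `g_p` tends to `0`. Hence a
superlevel set lies in a compact set on which all `g_p` are bounded away from `0`, and the
maximum on that compact set is global.
-/

open Finset Filter Real Topology

lemma exists_isMaxOn_of_isCompact_of_le_outside {α β : Type*} [TopologicalSpace α]
    [LinearOrder β] [TopologicalSpace β] [OrderClosedTopology β] {f : α → β} {U K : Set α}
    (hK : IsCompact K) (hKU : K ⊆ U) (hf : ContinuousOn f K) {x₀ : α} (hx₀ : x₀ ∈ K)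
    (hout : ∀ x ∈ U, x ∉ K → f x ≤ f x₀) : ∃ y ∈ U, IsMaxOn f U y := by
  obtain ⟨y, hyK, hy⟩ := hK.exists_isMaxOn ⟨x₀, hx₀⟩ hf
  refine ⟨y, hKU hyK, isMaxOn_iff.2 fun x hx => ?_⟩
  by_cases hxK : x ∈ K
  · exact hy hxK
  · exact (hout x hx hxK).trans (hy hx₀)

-- The tangent line of `log` at `4a`.
lemma mul_log_le_mul_log_add_div_four {a t : ℝ} (ha : 0 ≤ a) (ht : 0 < t) :
    a * log t ≤ a * log (4 * a) + t / 4 := by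
  rcases ha.eq_or_lt with rfl | ha
  · simp only [zero_mul, zero_add]
    positivity
  · have h := log_le_sub_one_of_pos (div_pos ht (by positivity : 0 < 4 * a))
    rw [log_div ht.ne' (by positivity)] at h
    have : a * (t / (4 * a)) = t / 4 := by field_simp
    nlinarith

section LogBarrier

variable {ι E : Type*} [NormedAddCommGroup E] {s : Finset ι} {g : ι → E → ℝ} {c : ℝ}

noncomputable def logBarrier (s : Finset ι) (g : ι → E → ℝ) (c : ℝ) (x : E) : ℝ :=
  c * ∑ i ∈ s, log (g i x) - ‖x‖ ^ 2 / 2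

lemma logBarrier_le (hc : 0 ≤ c) (hg_le : ∀ i ∈ s, ∀ x, g i x ≤ ‖x‖ ^ 2) {x : E}
    (hx : ∀ i ∈ s, 0 < g i x) (hx0 : x ≠ 0) :
    logBarrier s g c x ≤ c * s.card * log (4 * (c * s.card)) - ‖x‖ ^ 2 / 4 := by
  have hsum : ∑ i ∈ s, log (g i x) ≤ s.card * log (‖x‖ ^ 2) := by
    simpa using sum_le_card_nsmul s _ _ fun i hi => log_le_log (hx i hi) (hg_le i hi x)
  have hlog := mul_log_le_mul_log_add_div_four (a := c * s.card) (by positivity)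
    (pow_pos (norm_pos_iff.2 hx0) 2)
  unfold logBarrier
  nlinarith

lemma exists_forall_logBarrier_lt_of_le_norm (hc : 0 ≤ c)
    (hg_le : ∀ i ∈ s, ∀ x, g i x ≤ ‖x‖ ^ 2) (B : ℝ) :
    ∃ R, ∀ x, (∀ i ∈ s, 0 < g i x) → R ≤ ‖x‖ → logBarrier s g c x < B := by
  set A := c * s.card * log (4 * (c * s.card))
  refine ⟨max 1 (4 * (A - B) + 1), fun x hx hR => ?_⟩
  have h1 : 1 ≤ ‖x‖ := (le_max_left _ _).trans hR
  have h2 : 4 * (A - B) + 1 ≤ ‖x‖ := (le_max_right _ _).trans hR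
  have := logBarrier_le hc hg_le hx (norm_pos_iff.1 (by linarith))
  nlinarith

lemma exists_pos_forall_logBarrier_lt (hc : 0 < c)
    (hg_le : ∀ i ∈ s, ∀ x, g i x ≤ ‖x‖ ^ 2) (R B : ℝ) :
    ∃ δ > 0, ∀ x, (∀ i ∈ s, 0 < g i x) → ‖x‖ ≤ R →
      ∀ i ∈ s, g i x < δ → logBarrier s g c x < B := by
  classical
  have hlim : Tendsto (fun δ => c * log δ + c * (s.card * |log (R ^ 2)|)) (𝓝[>] 0) atBot :=
    tendsto_atBot_add_const_right _ _ (tendsto_log_nhdsGT_zero.const_mul_atBot hc)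
  obtain ⟨δ, hδB, hδ⟩ :=
    ((hlim.eventually (eventually_lt_atBot B)).and self_mem_nhdsWithin).exists
  refine ⟨δ, hδ, fun x hx hxR i hi hδi => ?_⟩
  have hlog_le : ∀ j ∈ s.erase i, log (g j x) ≤ |log (R ^ 2)| := fun j hj =>
    have hj := mem_of_mem_erase hj
    (log_le_log (hx j hj) ((hg_le j hj x).trans (by gcongr))).trans (le_abs_self _)
  have hrest : ∑ j ∈ s.erase i, log (g j x) ≤ s.card * |log (R ^ 2)| := calc
    _ ≤ (s.erase i).card * |log (R ^ 2)| := by simpa using sum_le_card_nsmul _ _ _ hlog_le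
    _ ≤ s.card * |log (R ^ 2)| := by gcongr; exact erase_subset i s
  have hi_le := log_le_log (hx i hi) hδi.le
  rw [logBarrier, ← add_sum_erase s _ hi]
  nlinarith [sq_nonneg ‖x‖]

theorem exists_isMaxOn_logBarrier [ProperSpace E] (hc : 0 < c)
    (hg : ∀ i ∈ s, Continuous (g i)) (hg_le : ∀ i ∈ s, ∀ x, g i x ≤ ‖x‖ ^ 2)
    {C : Set E} (hC : IsClosed C) {x₀ : E} (hx₀C : x₀ ∈ C)
    (hx₀ : ∀ i ∈ s, 0 < g i x₀) :
    ∃ y ∈ {x ∈ C | ∀ i ∈ s, 0 < g i x},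
      IsMaxOn (logBarrier s g c) {x ∈ C | ∀ i ∈ s, 0 < g i x} y := by
  obtain ⟨R₀, hR₀⟩ :=
    exists_forall_logBarrier_lt_of_le_norm hc.le hg_le (logBarrier s g c x₀)
  set R := max R₀ ‖x₀‖
  obtain ⟨δ, hδ, hδB⟩ := exists_pos_forall_logBarrier_lt hc hg_le R (logBarrier s g c x₀)
  set K := C ∩ Metric.closedBall 0 R ∩ ⋂ i ∈ s, {x | δ ≤ g i x}
  have hK : IsCompact K := ((isCompact_closedBall 0 R).inter_left hC).inter_right
    (isClosed_biInter fun i hi => isClosed_le continuous_const (hg i hi))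
  have hmemK {x : E} : x ∈ K ↔ x ∈ C ∧ ‖x‖ ≤ R ∧ ∀ i ∈ s, δ ≤ g i x := by
    simp [K, and_assoc]
  have hKU : K ⊆ {x ∈ C | ∀ i ∈ s, 0 < g i x} := fun x hx =>
    ⟨(hmemK.1 hx).1, fun i hi => hδ.trans_le ((hmemK.1 hx).2.2 i hi)⟩
  have hx₀K : x₀ ∈ K := hmemK.2 ⟨hx₀C, le_max_right _ _, fun i hi =>
    not_lt.1 fun h => (hδB x₀ hx₀ (le_max_right _ _) i hi h).false⟩
  have hcont : ContinuousOn (logBarrier s g c) K :=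
    (continuousOn_const.mul (continuousOn_finsetSum _ fun i hi =>
      (hg i hi).continuousOn.log fun x hx => ((hKU hx).2 i hi).ne')).sub (by fun_prop)
  refine exists_isMaxOn_of_isCompact_of_le_outside hK hKU hcont hx₀K fun x hx hxK => ?_
  by_cases hxR : ‖x‖ ≤ R
  · obtain ⟨i, hi, hgi⟩ : ∃ i ∈ s, g i x < δ := by
      by_contra! h
      exact hxK (hmemK.2 ⟨hx.1, hxR, h⟩)
    exact (hδB x hx.2 hxR i hi hgi).le
  · exact (hR₀ x hx.2 ((le_max_left _ _).trans (not_le.1 hxR).le)).le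

end LogBarrier

section TypeD

variable {N : ℕ}

lemma sq_sub_sq_le_norm_sq (x : EuclideanSpace ℝ (Fin N)) (i j : Fin N) :
    x i ^ 2 - x j ^ 2 ≤ ‖x‖ ^ 2 := by
  have := single_le_sum (f := fun k => x k ^ 2) (fun k _ => sq_nonneg _) (mem_univ i)
  rw [EuclideanSpace.norm_sq_eq]
  simp only [norm_eq_abs, sq_abs]
  nlinarith [sq_nonneg (x j)]

lemma apply_penultimate_le {x : Fin N → ℝ} {k' : Fin N} (hk' : k'.val + 2 = N)
    (hle : ∀ i j : Fin N, i < j → j.val + 1 < N → x j ≤ x i) (j : Fin N)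
    (hj : j.val + 1 < N) : x k' ≤ x j := by
  rcases (show j ≤ k' by rw [Fin.le_iff_val_le_val]; omega).eq_or_lt with rfl | hlt
  · exact le_rfl
  · exact hle _ _ hlt (by omega)

lemma weylChamberD_iff {k k' : Fin N} (hk : k.val + 1 = N) (hk' : k'.val + 2 = N)
    (x : Fin N → ℝ) :
    ((∀ i j : Fin N, i < j → j.val + 1 < N → x j < x i) ∧ |x k| < x k') ↔
      ((∀ i j : Fin N, i < j → j.val + 1 < N → x j ≤ x i) ∧ 0 ≤ x k')
        ∧ ∀ p ∈ univ.filter (fun p : Fin N × Fin N => p.1 < p.2),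
          0 < x p.1 ^ 2 - x p.2 ^ 2 := by
  simp only [mem_filter, mem_univ, true_and, sub_pos, Prod.forall]
  constructor
  · rintro ⟨hlt, habs⟩
    have hle : ∀ i j : Fin N, i < j → j.val + 1 < N → x j ≤ x i :=
      fun i j hij hj => (hlt i j hij hj).le
    have hk'_pos := (abs_nonneg _).trans_lt habs
    refine ⟨⟨hle, hk'_pos.le⟩, fun i j hij => ?_⟩
    have hij' : i.val < j.val := hij
    by_cases hj : j.val + 1 < N
    · have := apply_penultimate_le hk' hle j hj
      have := hlt i j hij hj
      nlinarith
    · obtain rfl : j = k := Fin.ext (by omega)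
      have := apply_penultimate_le hk' hle i (by omega)
      nlinarith [sq_abs (x j), abs_nonneg (x j)]
  · rintro ⟨⟨hle, hk'_nonneg⟩, hsq⟩
    refine ⟨fun i j hij hj =>
      (hle i j hij hj).lt_of_ne fun heq => (hsq i j hij).ne (by rw [heq]),
      abs_lt_of_sq_lt_sq (hsq _ _ (Fin.lt_def.2 (by omega))) hk'_nonneg⟩

end TypeD

/-- For `N ≥ 2`, the function
`W_D(x) = 2 ∑_{i<j} ln(x_i² − x_j²) − ‖x‖²/2` attains a global maximum on the interior
`{x : x_1 > ⋯ > x_{N−1} > |x_N|}` of the Weyl chamber of type `D`. -/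
theorem WD_attains_max (N : ℕ) (hN : 2 ≤ N)
    (W : EuclideanSpace ℝ (Fin N) → ℝ)
    (hW : ∀ x, W x = 2 * (∑ p ∈ Finset.univ.filter (fun p : Fin N × Fin N => p.1 < p.2),
        Real.log (x p.1 ^ 2 - x p.2 ^ 2)) - ‖x‖ ^ 2 / 2) :
    ∃ y : EuclideanSpace ℝ (Fin N),
      ((∀ i j : Fin N, i < j → j.val + 1 < N → y j < y i)
          ∧ |y ⟨N - 1, by omega⟩| < y ⟨N - 2, by omega⟩)
        ∧ ∀ x : EuclideanSpace ℝ (Fin N),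
            ((∀ i j : Fin N, i < j → j.val + 1 < N → x j < x i)
              ∧ |x ⟨N - 1, by omega⟩| < x ⟨N - 2, by omega⟩) → W x ≤ W y := by
  have hW' : W = logBarrier (univ.filter fun p : Fin N × Fin N => p.1 < p.2)
      (fun p x => x p.1 ^ 2 - x p.2 ^ 2) 2 := funext hW
  set C : Set (EuclideanSpace ℝ (Fin N)) :=
    {x | (∀ i j : Fin N, i < j → j.val + 1 < N → x j ≤ x i)
      ∧ 0 ≤ x ⟨N - 2, by omega⟩}
  have hC : IsClosed C := by
    simp only [C, Set.ofPred_and, Set.ofPred_forall]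
    exact (isClosed_iInter fun i => isClosed_iInter fun j => isClosed_iInter fun _ =>
      isClosed_iInter fun _ => isClosed_le (by fun_prop) (by fun_prop)).inter
        (isClosed_le continuous_const (by fun_prop))
  let x₀ : EuclideanSpace ℝ (Fin N) := WithLp.toLp 2 fun i => (N : ℝ) - i
  have hiff := weylChamberD_iff (N := N) (k := ⟨N - 1, by omega⟩) (k' := ⟨N - 2, by omega⟩)
    (by dsimp only; omega) (by dsimp only; omega)
  have hx₀ := (hiff x₀).1 ⟨fun i j hij _ => by simpa [x₀] using hij, by
    simp [x₀, Nat.cast_sub (by omega : 1 ≤ N), Nat.cast_sub hN]⟩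
  obtain ⟨y, hy, hmax⟩ :=
    exists_isMaxOn_logBarrier two_pos (fun (p : Fin N × Fin N) _ => by fun_prop)
    (fun p _ x => sq_sub_sq_le_norm_sq x p.1 p.2) hC hx₀.1 hx₀.2
  exact ⟨y, (hiff y).2 hy, fun x hx => hW' ▸ hmax ((hiff x).1 hx)⟩
end
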